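/- arXiv:math/9602217 — 4 statements merged into one kernel-verified Lean document; each statement's English description precedes it below -/
import Mathlib

section
/- Suppose tp(b̄/ā) is isolated and tp(ā/b̄) is not isolated. Then tp(ā/b̄) is not semi-isolated. -/
open FirstOrder Cardinal

namespace KimPaper

/-- A first-order formula in `n` free variables together with a tuple of
parameters from `M`. -/
def FP (L : FirstOrder.Language.{0, 0}) (M : Type) (n : ℕ) : Type :=
  Σ k : ℕ, L.Formula (Fin n ⊕ Fin k) × (Fin k → M)

/-- Realization of a formula-with-parameters by a tuple. -/
def FP.Realize {L : FirstOrder.Language.{0, 0}} {M : Type} [L.Structure M] {n : ℕ}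
    (F : FP L M n) (a : Fin n → M) : Prop :=
  F.2.1.Realize (Sum.elim a F.2.2)

/-- All parameters of the formula-with-parameters `F` lie in the set `A`. -/
def FP.ParamsIn {L : FirstOrder.Language.{0, 0}} {M : Type} {n : ℕ}
    (F : FP L M n) (A : Set M) : Prop :=
  ∀ i, F.2.2 i ∈ A

/-- The tuples `a` and `b` have the same complete type over the set `A`
(i.e. `tp(a/A) = tp(b/A)`). -/
def SameType (L : FirstOrder.Language.{0, 0}) {M : Type} [L.Structure M]
    (A : Set M) {n : ℕ} (a b : Fin n → M) : Prop :=
  ∀ (k : ℕ) (φ : L.Formula (Fin n ⊕ Fin k)) (c : Fin k → M),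
    (∀ i, c i ∈ A) → (φ.Realize (Sum.elim a c) ↔ φ.Realize (Sum.elim b c))

/-- The complete type of the tuple `a` over the set `A`: the collection of all
formulas with parameters in `A` realized by `a`. -/
def Tp (L : FirstOrder.Language.{0, 0}) {M : Type} [L.Structure M]
    (A : Set M) {n : ℕ} (a : Fin n → M) : Set (FP L M n) :=
  {F | F.ParamsIn A ∧ F.Realize a}

/-- The (partial) type `p` entails the formula-with-parameters `F`. -/
def Entails {L : FirstOrder.Language.{0, 0}} {M : Type} [L.Structure M] {n : ℕ}
    (p : Set (FP L M n)) (F : FP L M n) : Prop :=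
  ∀ a : Fin n → M, (∀ G ∈ p, G.Realize a) → F.Realize a

/-- The (partial) type `p` forks over the set `A`: there are a formula
`φ(x̄, ȳ)`, tuples `c i` all having the same type over `A`, and `k < ω` such
that `p ⊢ φ(x̄, c 0)` and `{φ(x̄, c i) | i < ω}` is `k`-inconsistent. -/
def ForksOver {L : FirstOrder.Language.{0, 0}} {M : Type} [L.Structure M] {n : ℕ}
    (p : Set (FP L M n)) (A : Set M) : Prop :=
  ∃ (m : ℕ) (φ : L.Formula (Fin n ⊕ Fin m)) (c : ℕ → Fin m → M) (k : ℕ),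
    (∀ i : ℕ, SameType L A (c i) (c 0)) ∧
    Entails p ⟨m, (φ, c 0)⟩ ∧
    ∀ s : Finset ℕ, s.card = k →
      ¬ ∃ a : Fin n → M, ∀ i ∈ s, φ.Realize (Sum.elim a (c i))

/-- The family of sets `C` is independent over `A`: for every `i` and every
tuple `c` from `C i`, `tp(c / A ∪ ⋃_{j ≠ i} C j)` does not fork over `A`. -/
def IndepFamily (L : FirstOrder.Language.{0, 0}) {M : Type} [L.Structure M]
    {ι : Type} (A : Set M) (C : ι → Set M) : Prop :=
  ∀ (i : ι) (n : ℕ) (c : Fin n → M), (∀ j, c j ∈ C i) →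
    ¬ ForksOver (Tp L (A ∪ ⋃ (j : ι) (_ : j ≠ i), C j) c) A

/-- The tuples `a` and `b` have the same complete type over `∅`. -/
def TpEq (L : FirstOrder.Language.{0, 0}) {M : Type} [L.Structure M] {n : ℕ}
    (a b : Fin n → M) : Prop :=
  ∀ ψ : L.Formula (Fin n), ψ.Realize a ↔ ψ.Realize b

/-- `tp(a/b)` is isolated: some formula `φ(x̄, b)` realized by `a` implies every
formula over `b` realized by `a`. -/
def IsolatedOver (L : FirstOrder.Language.{0, 0}) {M : Type} [L.Structure M]
    {n m : ℕ} (a : Fin n → M) (b : Fin m → M) : Prop :=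
  ∃ φ : L.Formula (Fin n ⊕ Fin m), φ.Realize (Sum.elim a b) ∧
    ∀ a' : Fin n → M, φ.Realize (Sum.elim a' b) →
      ∀ ψ : L.Formula (Fin n ⊕ Fin m),
        ψ.Realize (Sum.elim a b) → ψ.Realize (Sum.elim a' b)

/-- `tp(a/b)` is semi-isolated: some formula `φ(x̄, b)` realized by `a` implies
`tp(a)` (the complete type of `a` over `∅`). -/
def SemiIsolatedOver (L : FirstOrder.Language.{0, 0}) {M : Type} [L.Structure M]
    {n m : ℕ} (a : Fin n → M) (b : Fin m → M) : Prop :=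
  ∃ φ : L.Formula (Fin n ⊕ Fin m), φ.Realize (Sum.elim a b) ∧
    ∀ a' : Fin n → M, φ.Realize (Sum.elim a' b) →
      ∀ ψ : L.Formula (Fin n), ψ.Realize a → ψ.Realize a'

/-- `tp(a)` (over `∅`) is isolated. -/
def Isolated0 (L : FirstOrder.Language.{0, 0}) {M : Type} [L.Structure M]
    {n : ℕ} (a : Fin n → M) : Prop :=
  ∃ φ : L.Formula (Fin n), φ.Realize a ∧
    ∀ a' : Fin n → M, φ.Realize a' →
      ∀ ψ : L.Formula (Fin n), ψ.Realize a → ψ.Realize a'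

/-- `M` is `κ`-saturated: every finitely satisfiable set of formulas over a
parameter set of size `< κ` is realized in `M`. -/
def Saturated (L : FirstOrder.Language.{0, 0}) (M : Type) [L.Structure M]
    (κ : Cardinal.{0}) : Prop :=
  ∀ (n : ℕ) (A : Set M) (p : Set (FP L M n)),
    #A < κ → (∀ F ∈ p, F.ParamsIn A) →
    (∀ s : Finset (FP L M n), ↑s ⊆ p → ∃ a : Fin n → M, ∀ F ∈ s, F.Realize a) →
    ∃ a : Fin n → M, ∀ F ∈ p, F.Realize a

/-- `M` is strongly `κ`-homogeneous: every partial elementary map defined on a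
set of size `< κ` extends to an automorphism of `M`. -/
def StronglyHomogeneous (L : FirstOrder.Language.{0, 0}) (M : Type) [L.Structure M]
    (κ : Cardinal.{0}) : Prop :=
  ∀ (A : Set M) (f : M → M), #A < κ →
    (∀ (n : ℕ) (φ : L.Formula (Fin n)) (a : Fin n → M), (∀ i, a i ∈ A) →
      (φ.Realize a ↔ φ.Realize (f ∘ a))) →
    ∃ σ : M ≃[L] M, ∀ x ∈ A, σ x = f x

/-- `M` is a simple structure: every complete type over a set `B` does not fork
over some subset `A ⊆ B` of size at most `|T| = |L| + ℵ₀`. -/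
def SimpleStruct (L : FirstOrder.Language.{0, 0}) (M : Type) [L.Structure M] : Prop :=
  ∀ (n : ℕ) (B : Set M) (a : Fin n → M),
    ∃ A : Set M, A ⊆ B ∧ #A ≤ L.card + ℵ₀ ∧ ¬ ForksOver (Tp L B a) A

/-- `M` is a supersimple structure: every complete type over a set `B` does not
fork over some finite subset of `B`. -/
def SupersimpleStruct (L : FirstOrder.Language.{0, 0}) (M : Type) [L.Structure M] : Prop :=
  ∀ (n : ℕ) (B : Set M) (a : Fin n → M),
    ∃ A : Set M, A ⊆ B ∧ A.Finite ∧ ¬ ForksOver (Tp L B a) A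


lemma elim_comp_swap {α β M : Type*} (x : α → M) (y : β → M) :
    (Sum.elim x y) ∘ Sum.swap = Sum.elim y x := by
  funext s; cases s <;> rfl

/-- **Fact 2.2.** Suppose `tp(b/a)` is isolated whereas `tp(a/b)` is
nonisolated.  Then `tp(a/b)` is not semi-isolated. -/
theorem fact_2_2
    (L : FirstOrder.Language.{0, 0}) (M : Type) [L.Structure M]
    (κ : Cardinal.{0}) (hκ : L.card + ℵ₀ < κ)
    (hsat : Saturated L M κ) (hhom : StronglyHomogeneous L M κ)
    {n m : ℕ} (b : Fin n → M) (a : Fin m → M)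
    (hba : IsolatedOver L b a) (hab : ¬ IsolatedOver L a b) :
    ¬ SemiIsolatedOver L a b := by
  rintro ⟨φ, hφab, hφ⟩
  obtain ⟨θ, hθba, hθ⟩ := hba
  apply hab
  refine ⟨φ ⊓ θ.relabel Sum.swap, ?_, ?_⟩
  · rw [Language.Formula.realize_inf, Language.Formula.realize_relabel, elim_comp_swap]
    exact ⟨hφab, hθba⟩
  · intro a' ha' ψ hψ
    rw [Language.Formula.realize_inf, Language.Formula.realize_relabel, elim_comp_swap] at ha'
    obtain ⟨hφa', hθa'⟩ := ha'
    have hρ : (((θ.relabel Sum.swap).imp ψ).iAlls (Fin n)).Realize a := by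
      rw [Language.Formula.realize_iAlls]
      intro w
      show ((θ.relabel Sum.swap).imp ψ).Realize (Sum.elim a w)
      rw [Language.Formula.realize_imp, Language.Formula.realize_relabel, elim_comp_swap]
      intro hθw
      have := hθ w hθw (ψ.relabel Sum.swap)
      rw [Language.Formula.realize_relabel, Language.Formula.realize_relabel,
        elim_comp_swap, elim_comp_swap] at this
      exact this hψ
    have := hφ a' hφa' _ hρ
    rw [Language.Formula.realize_iAlls] at this
    have := this b
    change ((θ.relabel Sum.swap).imp ψ).Realize (Sum.elim a' b) at this
    rw [Language.Formula.realize_imp, Language.Formula.realize_relabel, elim_comp_swap] at this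
    exact this hθa'

end KimPaper
end

section
/- Let ā, b̄ be two realizations of the same complete type over ∅ such that tp(b̄/ā) is semi-isolated, witnessed by the formula φ(x̄,ā) (i.e., φ(b̄,ā) holds and every tuple satisfying φ(x̄,ā) realizes tp(b̄)), and such that tp(ā/b̄) is not semi-isolated. Then for every tuple c̄ with tp(c̄,b̄) = tp(b̄,ā), the formula φ(c̄,x̄) ∧ φ(x̄,ā) forks over ∅; in particular tp(b̄/c̄ā) forks over ∅. -/
open FirstOrder Cardinal

namespace KimPaper

section Helpers
open FirstOrder.Language

variable {L : FirstOrder.Language.{0,0}} {M : Type} [L.Structure M] {n : ℕ}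

lemma tpEq_symm {u v : Fin n → M} (h : TpEq L u v) : TpEq L v u :=
  fun ψ => (h ψ).symm

lemma tpEq_trans {u v w : Fin n → M} (h1 : TpEq L u v) (h2 : TpEq L v w) : TpEq L u w :=
  fun ψ => (h1 ψ).trans (h2 ψ)

lemma tpEq_of_imp {u v : Fin n → M}
    (h : ∀ ψ : L.Formula (Fin n), ψ.Realize u → ψ.Realize v) : TpEq L u v := by
  intro ψ
  refine ⟨h ψ, fun hv => ?_⟩
  by_contra hu
  have := h ψ.not (by simpa using hu)
  simp at this
  exact this hv

lemma forall_imp_transfer (φ : L.Formula (Fin n ⊕ Fin n)) (ψ : L.Formula (Fin n))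
    {a a' : Fin n → M} (ha' : TpEq L a' a)
    (H : ∀ e : Fin n → M, φ.Realize (Sum.elim e a) → ψ.Realize e) :
    ∀ e : Fin n → M, φ.Realize (Sum.elim e a') → ψ.Realize e := by
  classical
  let θ : L.Formula (Fin n) := ((φ.imp (ψ.relabel Sum.inl)).relabel Sum.swap).iAlls (Fin n)
  have hreal : ∀ v : Fin n → M,
      θ.Realize v ↔ ∀ e : Fin n → M, φ.Realize (Sum.elim e v) → ψ.Realize e := by
    intro v
    rw [show θ = ((φ.imp (ψ.relabel Sum.inl)).relabel Sum.swap).iAlls (Fin n) from rfl,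
      Formula.realize_iAlls]
    refine forall_congr' fun e => ?_
    rw [Formula.realize_relabel]
    have hfun : (Sum.elim v e ∘ Sum.swap) = Sum.elim e v := by
      funext p; cases p <;> rfl
    rw [hfun, Formula.realize_imp, Formula.realize_relabel, Sum.elim_comp_inl]
  intro e he
  exact (hreal a').mp ((ha' θ).mpr ((hreal a).mpr H)) e he

lemma si_invariant {u v u' v' : Fin n → M}
    (h : ∀ ψ : L.Formula (Fin n ⊕ Fin n),
      ψ.Realize (Sum.elim u v) ↔ ψ.Realize (Sum.elim u' v'))
    (hsi : SemiIsolatedOver L u v) : SemiIsolatedOver L u' v' := by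
  obtain ⟨φ1, h1, h2⟩ := hsi
  refine ⟨φ1, (h φ1).mp h1, ?_⟩
  intro x hx ψ hψ
  have huu' : ψ.Realize u := by
    have := h (ψ.relabel Sum.inl)
    rw [Formula.realize_relabel, Formula.realize_relabel,
      Sum.elim_comp_inl, Sum.elim_comp_inl] at this
    exact this.mpr hψ
  have hvv' : TpEq L v' v := by
    intro ψ'
    have := h (ψ'.relabel Sum.inr)
    rw [Formula.realize_relabel, Formula.realize_relabel,
      Sum.elim_comp_inr, Sum.elim_comp_inr] at this
    exact this.symm
  exact forall_imp_transfer φ1 ψ hvv' (fun e he => h2 e he ψ huu') x hx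

lemma si_trans {u v w : Fin n → M} (h1 : SemiIsolatedOver L u v)
    (h2 : SemiIsolatedOver L v w) : SemiIsolatedOver L u w := by
  classical
  obtain ⟨φ1, r1, s1⟩ := h1
  obtain ⟨φ2, r2, s2⟩ := h2
  let m2 : Fin n ⊕ Fin n → (Fin n ⊕ Fin n) ⊕ Fin n :=
    Sum.elim (fun j => Sum.inr j) (fun j => Sum.inl (Sum.inr j))
  let m1 : Fin n ⊕ Fin n → (Fin n ⊕ Fin n) ⊕ Fin n :=
    Sum.elim (fun j => Sum.inl (Sum.inl j)) (fun j => Sum.inr j)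
  let ρ : L.Formula (Fin n ⊕ Fin n) := ((φ2.relabel m2) ⊓ (φ1.relabel m1)).iExs (Fin n)
  have hreal : ∀ (x y : Fin n → M), ρ.Realize (Sum.elim x y) ↔
      ∃ z : Fin n → M, φ2.Realize (Sum.elim z y) ∧ φ1.Realize (Sum.elim x z) := by
    intro x y
    rw [show ρ = ((φ2.relabel m2) ⊓ (φ1.relabel m1)).iExs (Fin n) from rfl,
      Formula.realize_iExs]
    refine exists_congr fun z => ?_
    rw [Formula.realize_inf, Formula.realize_relabel, Formula.realize_relabel]
    have e2 : (Sum.elim (Sum.elim x y) z ∘ m2) = Sum.elim z y := by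
      funext p; cases p <;> rfl
    have e1 : (Sum.elim (Sum.elim x y) z ∘ m1) = Sum.elim x z := by
      funext p; cases p <;> rfl
    rw [e2, e1]
  refine ⟨ρ, (hreal u w).mpr ⟨v, r2, r1⟩, ?_⟩
  intro x hx ψ hψ
  obtain ⟨z, hz2, hz1⟩ := (hreal x w).mp hx
  have hzv : TpEq L z v := tpEq_symm (tpEq_of_imp (fun ψ' h' => s2 z hz2 ψ' h'))
  exact forall_imp_transfer φ1 ψ hzv (fun e he => s1 e he ψ hψ) x hz1

end Helpers

open FirstOrder.Language in
/-- The claim in the proof of Proposition 2.3: if `tp(a) = tp(b)`,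
`φ(x̄, a)` witnesses the semi-isolation of `tp(b/a)` and `tp(a/b)` is not
semi-isolated, then for every `c` with `tp(c, b) = tp(b, a)` the formula
`φ(c, x̄) ∧ φ(x̄, a)` forks over `∅`; in particular `tp(b/ca)` forks over
`∅`. -/
theorem claim_in_prop_2_3
    (L : FirstOrder.Language.{0, 0}) (M : Type) [L.Structure M]
    (κ : Cardinal.{0}) (hκ : L.card + ℵ₀ < κ)
    (hsat : Saturated L M κ) (hhom : StronglyHomogeneous L M κ)
    {n : ℕ} (a b : Fin n → M) (hab : TpEq L a b)
    (φ : L.Formula (Fin n ⊕ Fin n))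
    (hφb : φ.Realize (Sum.elim b a))
    (hφwit : ∀ b' : Fin n → M, φ.Realize (Sum.elim b' a) →
      ∀ ψ : L.Formula (Fin n), ψ.Realize b → ψ.Realize b')
    (hnab : ¬ SemiIsolatedOver L a b)
    (c : Fin n → M)
    (hc : ∀ ψ : L.Formula (Fin n ⊕ Fin n),
      ψ.Realize (Sum.elim c b) ↔ ψ.Realize (Sum.elim b a)) :
    ForksOver ({⟨n, (φ.relabel Sum.swap, c)⟩, ⟨n, (φ, a)⟩} : Set (FP L M n)) ∅ ∧
      ForksOver (Tp L (Set.range c ∪ Set.range a) b) ∅ := by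
  classical
  have pairEq : ∀ ψ : L.Formula (Fin n ⊕ Fin n),
      ψ.Realize (Sum.elim a b) ↔ ψ.Realize (Sum.elim b c) := by
    intro ψ
    have h := hc (ψ.relabel Sum.swap)
    rw [Formula.realize_relabel, Formula.realize_relabel] at h
    have e1 : (Sum.elim c b ∘ Sum.swap) = Sum.elim b c := by funext p; cases p <;> rfl
    have e2 : (Sum.elim b a ∘ Sum.swap) = Sum.elim a b := by funext p; cases p <;> rfl
    rw [e1, e2] at h
    exact h.symm
  have wd : ∀ p q : Fin n ⊕ Fin n, Sum.elim a b p = Sum.elim a b q →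
      Sum.elim b c p = Sum.elim b c q := by
    intro p q hpq
    have h := (pairEq ((Term.var p).equal (Term.var q))).mp
      (by rw [Formula.realize_equal]; simpa using hpq)
    rw [Formula.realize_equal] at h
    simpa using h
  let g : Fin n ⊕ Fin n → M := Sum.elim a b
  let g' : Fin n ⊕ Fin n → M := Sum.elim b c
  let f : M → M := fun x => if h : ∃ p, g p = x then g' h.choose else x
  have hf : ∀ p, f (g p) = g' p := by
    intro p
    have hex : ∃ q, g q = g p := ⟨p, rfl⟩
    simp only [f, dif_pos hex]
    exact wd _ _ hex.choose_spec
  have hAfin : #(↑(Set.range g)) < κ :=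
    lt_of_lt_of_le ((Set.finite_range g).lt_aleph0) (le_trans le_add_self hκ.le)
  have helem : ∀ (k : ℕ) (ψ : L.Formula (Fin k)) (t : Fin k → M),
      (∀ i, t i ∈ Set.range g) → (ψ.Realize t ↔ ψ.Realize (f ∘ t)) := by
    intro k ψ t ht
    choose j hj using ht
    have h1 : t = g ∘ j := funext fun i => (hj i).symm
    have h2 : f ∘ t = g' ∘ j := by
      funext i
      show f (t i) = g' (j i)
      rw [show t i = g (j i) from (hj i).symm, hf]
    rw [h2, h1]
    have h3 := pairEq (ψ.relabel j)
    rw [Formula.realize_relabel, Formula.realize_relabel] at h3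
    exact h3
  obtain ⟨σ, hσ⟩ := hhom (Set.range g) f hAfin helem
  have hσa : ∀ i, σ (a i) = b i := fun i =>
    (hσ (a i) ⟨Sum.inl i, rfl⟩).trans (hf (Sum.inl i))
  have hσb : ∀ i, σ (b i) = c i := fun i =>
    (hσ (b i) ⟨Sum.inr i, rfl⟩).trans (hf (Sum.inr i))
  let A : ℕ → Fin n → M := fun m i => (⇑σ)^[m] (a i)
  have iterlem : ∀ (α : Type) (ψ : L.Formula α) (m : ℕ) (v : α → M),
      ψ.Realize ((⇑σ)^[m] ∘ v) ↔ ψ.Realize v := by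
    intro α ψ m
    induction m with
    | zero => intro v; rw [show ((⇑σ)^[0] ∘ v) = v from rfl]
    | succ m ih =>
      intro v
      have h : ((⇑σ)^[m+1] ∘ v) = ⇑σ ∘ ((⇑σ)^[m] ∘ v) := by
        funext i; exact Function.iterate_succ_apply' _ _ _
      rw [h]
      exact (StrongHomClass.realize_formula σ ψ).trans (ih v)
  have hA1 : A 1 = b := funext fun i => hσa i
  have hA2 : A 2 = c := funext fun i => by
    show σ (σ (a i)) = c i
    rw [hσa i, hσb i]
  have hAadd : ∀ (m t : ℕ) (i : Fin n), A (m + t) i = (⇑σ)^[m] (A t i) := by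
    intro m t i
    show (⇑σ)^[m + t] (a i) = _
    rw [Function.iterate_add_apply]
  have tpA : ∀ m, TpEq L (A m) a := by
    intro m ψ
    have h := iterlem (Fin n) ψ m a
    rw [show ((⇑σ)^[m] ∘ a) = A m from rfl] at h
    exact h
  have tpAb : ∀ m, TpEq L (A m) b := fun m => tpEq_trans (tpA m) hab
  have φstep : ∀ m, φ.Realize (Sum.elim (A (m+1)) (A m)) := by
    intro m
    have hfe : Sum.elim (A (m+1)) (A m) = (⇑σ)^[m] ∘ Sum.elim (A 1) (A 0) := by
      funext p
      cases p with
      | inl j => exact hAadd m 1 j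
      | inr j => exact hAadd m 0 j
    rw [hfe]
    refine (iterlem _ φ m _).mpr ?_
    rw [hA1]
    exact hφb
  have key : ∀ a' : Fin n → M, TpEq L a' a → ∀ e : Fin n → M,
      φ.Realize (Sum.elim e a') → TpEq L e b := by
    intro a' ha' e he
    refine tpEq_symm (tpEq_of_imp ?_)
    intro ψ hψb
    exact forall_imp_transfer φ ψ ha' (fun e' h' => hφwit e' h' ψ hψb) e he
  have stepSI : ∀ m, SemiIsolatedOver L (A (m+1)) (A m) := by
    intro m
    refine ⟨φ, φstep m, ?_⟩
    intro x hx ψ hψ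
    have hxb := key (A m) (tpA m) x hx
    exact (hxb ψ).mpr ((tpAb (m+1) ψ).mp hψ)
  have chainSI : ∀ u, SemiIsolatedOver L (A (u+2)) (A 1) := by
    intro u
    induction u with
    | zero => exact stepSI 1
    | succ u ih => exact si_trans (stepSI (u+2)) ih
  let E : Fin n ⊕ Fin n ≃ Fin (n + n) := finSumFinEquiv
  let d : ℕ → Fin (n + n) → M := fun i => Sum.elim (A (3*i+2)) (A (3*i)) ∘ ⇑E.symm
  let ρ1 : Fin n ⊕ Fin n → Fin n ⊕ Fin (n + n) :=
    Sum.elim (fun j => Sum.inr (E (Sum.inl j))) Sum.inl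
  let ρ2 : Fin n ⊕ Fin n → Fin n ⊕ Fin (n + n) :=
    Sum.elim Sum.inl (fun j => Sum.inr (E (Sum.inr j)))
  let Ψ : L.Formula (Fin n ⊕ Fin (n+n)) := (φ.relabel ρ1) ⊓ (φ.relabel ρ2)
  have Ψreal : ∀ (x : Fin n → M) (i : ℕ), Ψ.Realize (Sum.elim x (d i)) ↔
      (φ.Realize (Sum.elim (A (3*i+2)) x) ∧ φ.Realize (Sum.elim x (A (3*i)))) := by
    intro x i
    rw [show Ψ = (φ.relabel ρ1) ⊓ (φ.relabel ρ2) from rfl, Formula.realize_inf,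
      Formula.realize_relabel, Formula.realize_relabel]
    have e1 : (Sum.elim x (d i) ∘ ρ1) = Sum.elim (A (3*i+2)) x := by
      funext p
      cases p with
      | inl j =>
        show Sum.elim (A (3*i+2)) (A (3*i)) (E.symm (E (Sum.inl j))) = _
        rw [Equiv.symm_apply_apply]
        rfl
      | inr j => rfl
    have e2 : (Sum.elim x (d i) ∘ ρ2) = Sum.elim x (A (3*i)) := by
      funext p
      cases p with
      | inl j => rfl
      | inr j =>
        show Sum.elim (A (3*i+2)) (A (3*i)) (E.symm (E (Sum.inr j))) = _
        rw [Equiv.symm_apply_apply]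
        rfl
    rw [e1, e2]
  have hsame : ∀ i : ℕ, SameType L ∅ (d i) (d 0) := by
    intro i k ψ cc hcc
    cases k with
    | zero =>
      have hdi : Sum.elim (d i) cc = (⇑σ)^[3*i] ∘ Sum.elim (d 0) cc := by
        funext p
        cases p with
        | inl q =>
          show Sum.elim (A (3*i+2)) (A (3*i)) (E.symm q)
            = (⇑σ)^[3*i] (Sum.elim (A (3*0+2)) (A (3*0)) (E.symm q))
          cases E.symm q with
          | inl j => exact hAadd (3*i) 2 j
          | inr j => exact hAadd (3*i) 0 j
        | inr q => exact q.elim0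
      rw [hdi]
      exact iterlem _ ψ (3*i) _
    | succ k => exact absurd (hcc 0) (Set.notMem_empty _)
  have hent : ∀ x : Fin n → M,
      (φ.relabel Sum.swap).Realize (Sum.elim x c) → φ.Realize (Sum.elim x a) →
      FP.Realize ⟨n+n, (Ψ, d 0)⟩ x := by
    intro x h1 h2
    show Ψ.Realize (Sum.elim x (d 0))
    rw [Ψreal x 0]
    constructor
    · rw [Formula.realize_relabel] at h1
      have hsw : (Sum.elim x c ∘ Sum.swap) = Sum.elim c x := by
        funext p; cases p <;> rfl
      rw [hsw] at h1
      show φ.Realize (Sum.elim (A 2) x)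
      rw [hA2]
      exact h1
    · show φ.Realize (Sum.elim x (A 0))
      exact h2
  have hkey2 : ∀ i j : ℕ, i < j → ∀ x : Fin n → M,
      (φ.Realize (Sum.elim (A (3*i+2)) x) ∧ φ.Realize (Sum.elim x (A (3*i)))) →
      (φ.Realize (Sum.elim (A (3*j+2)) x) ∧ φ.Realize (Sum.elim x (A (3*j)))) → False := by
    intro i j hij x hi hj
    obtain ⟨hi1, hi2⟩ := hi
    obtain ⟨hj1, hj2⟩ := hj
    have hx_b : TpEq L x b := key (A (3*j)) (tpA _) x hj2
    have hx_a : TpEq L x a := tpEq_trans hx_b (tpEq_symm hab)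
    have S1 : SemiIsolatedOver L (A (3*i+2)) x := by
      refine ⟨φ, hi1, ?_⟩
      intro y hy ψ hψ
      have hyb := key x hx_a y hy
      exact (hyb ψ).mpr ((tpAb (3*i+2) ψ).mp hψ)
    have S2 : SemiIsolatedOver L x (A (3*j)) := by
      refine ⟨φ, hj2, ?_⟩
      intro y hy ψ hψ
      have hyb := key (A (3*j)) (tpA _) y hy
      exact (hyb ψ).mpr ((hx_b ψ).mp hψ)
    have S3 := si_trans S1 S2
    obtain ⟨t, ht⟩ : ∃ t, 3*j = (3*i+2) + (t+1) := ⟨3*j - 3*i - 3, by omega⟩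
    have hpair : ∀ ψ : L.Formula (Fin n ⊕ Fin n),
        ψ.Realize (Sum.elim (A (3*i+2)) (A (3*j))) ↔
          ψ.Realize (Sum.elim a (A (t+1))) := by
      intro ψ
      rw [ht]
      have hfe : Sum.elim (A (3*i+2)) (A ((3*i+2) + (t+1))) =
          (⇑σ)^[3*i+2] ∘ Sum.elim (A 0) (A (t+1)) := by
        funext p
        cases p with
        | inl j' => exact hAadd (3*i+2) 0 j'
        | inr j' => exact hAadd (3*i+2) (t+1) j'
      rw [hfe]
      exact iterlem _ ψ _ _
    have S4 : SemiIsolatedOver L a (A (t+1)) := si_invariant hpair S3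
    have S5 : SemiIsolatedOver L a (A 1) := by
      cases t with
      | zero => exact S4
      | succ t2 => exact si_trans S4 (chainSI t2)
    rw [hA1] at S5
    exact hnab S5
  have hincon : ∀ s : Finset ℕ, s.card = 2 →
      ¬ ∃ x : Fin n → M, ∀ i ∈ s, Ψ.Realize (Sum.elim x (d i)) := by
    rintro s hs ⟨x, hx⟩
    obtain ⟨i, hi, j, hj, hne⟩ := Finset.one_lt_card.mp (show 1 < s.card by omega)
    have Hi := (Ψreal x i).mp (hx i hi)
    have Hj := (Ψreal x j).mp (hx j hj)
    rcases hne.lt_or_gt with h | h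
    · exact hkey2 i j h x Hi Hj
    · exact hkey2 j i h x Hj Hi
  have hF1b : (φ.relabel Sum.swap).Realize (Sum.elim b c) := by
    rw [Formula.realize_relabel]
    have hsw : (Sum.elim b c ∘ Sum.swap) = Sum.elim c b := by
      funext p; cases p <;> rfl
    rw [hsw]
    exact (hc φ).mpr hφb
  refine ⟨⟨n+n, Ψ, d, 2, hsame, ?_, hincon⟩, ⟨n+n, Ψ, d, 2, hsame, ?_, hincon⟩⟩
  · intro x hx
    exact hent x (hx _ (Set.mem_insert _ _)) (hx _ (Set.mem_insert_of_mem _ rfl))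
  · intro x hx
    have h1 := hx ⟨n, (φ.relabel Sum.swap, c)⟩ ⟨fun i => Or.inl ⟨i, rfl⟩, hF1b⟩
    have h2 := hx ⟨n, (φ, a)⟩ ⟨fun i => Or.inr ⟨i, rfl⟩, hφb⟩
    exact hent x h1 h2


end KimPaper
end

section
/- Assume T is supersimple. Then there do not exist a finite tuple ā and a family of tuples {c̄_i | i < ω} that is independent over ∅ such that tp(ā/c̄_i) forks over ∅ for every i < ω. -/
open FirstOrder Cardinal

namespace KimPaper

/-! ### Auxiliary toolkit -/

section Toolkit

variable {L : FirstOrder.Language.{0, 0}} {M : Type} [L.Structure M]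

open FirstOrder.Language

/-- Automorphisms preserve realization of formulas. -/
theorem aut_realize (σ : M ≃[L] M) {α : Type} (φ : L.Formula α) (v : α → M) :
    φ.Realize (⇑σ ∘ v) ↔ φ.Realize v := by
  have h := σ.toElementaryEmbedding.map_formula φ v
  rwa [Equiv.coe_toElementaryEmbedding] at h

theorem aut_realize_elim (σ : M ≃[L] M) {α β : Type} (φ : L.Formula (α ⊕ β))
    (x : α → M) (z : β → M) :
    φ.Realize (Sum.elim (⇑σ ∘ x) (⇑σ ∘ z)) ↔ φ.Realize (Sum.elim x z) := by
  have : Sum.elim (⇑σ ∘ x) (⇑σ ∘ z) = ⇑σ ∘ Sum.elim x z := by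
    funext w; cases w <;> rfl
  rw [this, aut_realize]

/-- Pure-type equality of two tuples, from `SameType` over `∅`. -/
theorem tpEq_of_sameType_empty {q : ℕ} {x y : Fin q → M}
    (h : SameType L (∅ : Set M) x y) : TpEq L x y := by
  intro χ
  have h0 := h 0 (χ.relabel Sum.inl) (fun i => i.elim0) (fun i => i.elim0)
  simpa using h0

theorem sameType_empty_of_tpEq {q : ℕ} {x y : Fin q → M}
    (h : TpEq L x y) : SameType L (∅ : Set M) x y := by
  intro k φ c hc
  haveI : IsEmpty (Fin k) := ⟨fun i => absurd (hc i) (Set.notMem_empty _)⟩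
  have hval : ∀ z : Fin q → M,
      z ∘ (Sum.elim id isEmptyElim : Fin q ⊕ Fin k → Fin q) = Sum.elim z c := by
    intro z; funext w
    rcases w with w | w
    · rfl
    · exact isEmptyElim w
  have h' := h (φ.relabel (Sum.elim id isEmptyElim))
  rw [Formula.realize_relabel, Formula.realize_relabel, hval, hval] at h'
  exact h' 

/-- Tuples with the same pure type are conjugate under an automorphism. -/
theorem exists_aut_of_tpEq (hhom : StronglyHomogeneous L M κ)
    (hfin : ∀ A : Set M, A.Finite → #A < κ)
    {q : ℕ} {x y : Fin q → M} (h : TpEq L x y) :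
    ∃ σ : M ≃[L] M, ⇑σ ∘ x = y := by
  classical
  set f : M → M := fun z => if h' : ∃ t, x t = z then y h'.choose else z with hf
  have hfx : ∀ t, f (x t) = y t := by
    intro t
    have h' : ∃ t', x t' = x t := ⟨t, rfl⟩
    have hch : x h'.choose = x t := h'.choose_spec
    have : y h'.choose = y t := by
      have heq := h ((Term.var h'.choose).equal (Term.var t))
      simp only [Formula.realize_equal, Term.realize_var] at heq
      exact heq.1 hch
    simp only [hf, dif_pos h', this]
  have helem : ∀ (n : ℕ) (φ : L.Formula (Fin n)) (a : Fin n → M),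
      (∀ i, a i ∈ Set.range x) → (φ.Realize a ↔ φ.Realize (f ∘ a)) := by
    intro n φ a ha
    choose g hg using ha
    have hax : a = x ∘ g := by funext i; exact (hg i).symm
    have hfa : f ∘ a = y ∘ g := by
      funext i; simp only [Function.comp_apply, hax, Function.comp_apply, hfx]
    rw [hfa, hax]
    have h' := h (φ.relabel g)
    rw [Formula.realize_relabel, Formula.realize_relabel] at h'
    exact h' 
  obtain ⟨σ, hσ⟩ := hhom (Set.range x) f
    (hfin _ (Set.finite_range x)) helem
  refine ⟨σ, funext fun t => ?_⟩
  rw [Function.comp_apply, hσ (x t) ⟨t, rfl⟩, hfx]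

end Toolkit
section Toolkit2

variable {L : FirstOrder.Language.{0, 0}} {M : Type} [L.Structure M]

open FirstOrder.Language

theorem realize_foldr_inf' {α : Type} (l : List (L.Formula α)) (v : α → M) :
    (l.foldr (· ⊓ ·) ⊤).Realize v ↔ ∀ φ ∈ l, φ.Realize v :=
  BoundedFormula.realize_foldr_inf l v default

/-- Existential closure of the first block of variables of a formula. -/
noncomputable def exsF {V : Type} {N : ℕ} (χ : L.Formula (Fin N ⊕ V)) : L.Formula V :=
  (BoundedFormula.relabel (Sum.elim (Sum.inr : Fin N → V ⊕ Fin N) Sum.inl) χ).exs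

theorem realize_exsF {V : Type} {N : ℕ} (χ : L.Formula (Fin N ⊕ V)) (v : V → M) :
    (exsF χ).Realize v ↔ ∃ y : Fin N → M, χ.Realize (Sum.elim y v) := by
  rw [exsF, BoundedFormula.realize_exs]
  have hval : ∀ xs : Fin (N + 0) → M,
      (Sum.elim v (xs ∘ Fin.castAdd 0)) ∘
        (Sum.elim (Sum.inr : Fin N → V ⊕ Fin N) Sum.inl) = Sum.elim (xs ∘ Fin.castAdd 0) v := by
    intro xs; funext w; rcases w with w | w <;> rfl
  constructor
  · rintro ⟨xs, hxs⟩
    rw [BoundedFormula.realize_relabel, hval,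
      show xs ∘ Fin.natAdd N = (default : Fin 0 → M) from funext fun i => i.elim0] at hxs
    exact ⟨xs ∘ Fin.castAdd 0, hxs⟩
  · rintro ⟨y, hy⟩
    refine ⟨(y : Fin (N + 0) → M), ?_⟩
    rw [BoundedFormula.realize_relabel, hval,
      show (y : Fin (N + 0) → M) ∘ Fin.natAdd N = (default : Fin 0 → M) from
        funext fun i => i.elim0,
      show (y : Fin (N + 0) → M) ∘ Fin.castAdd 0 = y from funext fun i => rfl]
    exact hy

end Toolkit2
section Ultralimit

variable {L : FirstOrder.Language.{0, 0}} {M : Type} [L.Structure M] {κ : Cardinal.{0}}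

open FirstOrder.Language

theorem finite_lt_kappa (hκ : L.card + ℵ₀ < κ) {A : Set M} (hA : A.Finite) : #A < κ :=
  lt_of_lt_of_le hA.lt_aleph0 (le_trans (self_le_add_left _ _) hκ.le)

theorem countable_lt_kappa (hκ : L.card + ℵ₀ < κ) {A : Set M} (hA : A.Countable) : #A < κ := by
  have h1 : #A ≤ ℵ₀ := by
    haveI := hA.to_subtype
    exact Cardinal.mk_le_aleph0
  exact lt_of_le_of_lt h1 (lt_of_le_of_lt (self_le_add_left _ _) hκ)

/-- Ultrafilter limit of a sequence of `p`-tuples over a small parameter set. -/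
theorem ulimit_exists (hκ : L.card + ℵ₀ < κ) (hsat : Saturated L M κ)
    (U : Ultrafilter ℕ) {p : ℕ} (g : ℕ → Fin p → M)
    (Q : Set M) (hQ : Q.Countable) (hg : ∀ j t, g j t ∈ Q) :
    ∃ gh : Fin p → M, ∀ (kk : ℕ) (ψ : L.Formula (Fin p ⊕ Fin kk)) (par : Fin kk → M),
      (∀ t, par t ∈ Q) →
      (ψ.Realize (Sum.elim gh par) ↔ {j | ψ.Realize (Sum.elim (g j) par)} ∈ U) := by
  classical
  set ptype : Set (FP L M p) :=
    {F | (∀ t, F.2.2 t ∈ Q) ∧ {j | F.Realize (g j)} ∈ U} with hptype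
  have hsub : ∀ F ∈ ptype, FP.ParamsIn F Q := fun F hF => hF.1
  have hfin : ∀ s : Finset (FP L M p), ↑s ⊆ ptype →
      ∃ x : Fin p → M, ∀ F ∈ s, F.Realize x := by
    intro s hs
    have hInt : (⋂ F ∈ s, {j | F.Realize (g j)}) ∈ (U : Filter ℕ) :=
      (Filter.biInter_finset_mem s).2 (fun F hF => (hs hF).2)
    obtain ⟨j, hj⟩ := Filter.nonempty_of_mem hInt
    refine ⟨g j, fun F hF => ?_⟩
    simp only [Set.mem_iInter] at hj
    exact hj F hF
  obtain ⟨gh, hgh⟩ := hsat p Q ptype (countable_lt_kappa hκ hQ) hsub hfin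
  refine ⟨gh, fun kk ψ par hpar => ?_⟩
  constructor
  · intro hR
    by_contra hU
    have hUc : {j | ψ.Realize (Sum.elim (g j) par)}ᶜ ∈ U :=
      (Ultrafilter.compl_mem_iff_notMem).2 hU
    have hmem : (⟨kk, (ψ.not, par)⟩ : FP L M p) ∈ ptype := by
      refine ⟨hpar, ?_⟩
      have hseteq : {j | FP.Realize (⟨kk, (ψ.not, par)⟩ : FP L M p) (g j)}
          = {j | ψ.Realize (Sum.elim (g j) par)}ᶜ := by
        ext j
        simp [FP.Realize, Formula.realize_not]
      rw [hseteq]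
      exact hUc
    have := hgh _ hmem
    simp only [FP.Realize, Formula.realize_not] at this
    exact this hR
  · intro hU
    have hmem : (⟨kk, (ψ, par)⟩ : FP L M p) ∈ ptype := ⟨hpar, hU⟩
    exact hgh _ hmem

end Ultralimit
section Morley

open FirstOrder.Language

/-- Iterated `U`-largeness for sets of increasing tuples (peeling the last index). -/
def Lg (U : Ultrafilter ℕ) : (v : ℕ) → ((Fin v → ℕ) → Prop) → Prop
  | 0, S => S finZeroElim
  | v + 1, S => {j | Lg U v (fun w => S (Fin.snoc w j))} ∈ U

theorem Lg_zero (U : Ultrafilter ℕ) (S : (Fin 0 → ℕ) → Prop) : Lg U 0 S ↔ S finZeroElim :=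
  Iff.rfl

theorem Lg_succ (U : Ultrafilter ℕ) (v : ℕ) (S : (Fin (v+1) → ℕ) → Prop) :
    Lg U (v+1) S ↔ {j | Lg U v (fun w => S (Fin.snoc w j))} ∈ U :=
  Iff.rfl

theorem Lg_congr (U : Ultrafilter ℕ) : ∀ (v : ℕ) {S S' : (Fin v → ℕ) → Prop},
    (∀ w, S w ↔ S' w) → (Lg U v S ↔ Lg U v S') := by
  intro v
  induction v with
  | zero => intro S S' h; exact h _
  | succ v ih =>
    intro S S' h
    rw [Lg_succ, Lg_succ]
    exact Filter.congr_sets (Filter.Eventually.of_forall fun j => by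
      simpa using ih (fun w => h (Fin.snoc w j)))

theorem snoc_injective {v : ℕ} {w : Fin v → ℕ} {j : ℕ}
    (hw : Function.Injective w) (hj : ∀ t, w t ≠ j) :
    Function.Injective (Fin.snoc w j : Fin (v+1) → ℕ) := by
  intro a b hab
  induction a using Fin.lastCases with
  | last =>
    induction b using Fin.lastCases with
    | last => rfl
    | cast b' =>
      rw [Fin.snoc_last, Fin.snoc_castSucc] at hab
      exact absurd hab.symm (hj b')
  | cast a' =>
    induction b using Fin.lastCases with
    | last =>
      rw [Fin.snoc_last, Fin.snoc_castSucc] at hab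
      exact absurd hab (hj a')
    | cast b' =>
      rw [Fin.snoc_castSucc, Fin.snoc_castSucc] at hab
      rw [hw hab]

/-- If `S` holds for all injective tuples (outside a finite obstruction), it is `U`-large. -/
theorem Lg_of_forall_injective (U : Ultrafilter ℕ)
    (hfree : ∀ F : Finset ℕ, {j | j ∉ F} ∈ U) :
    ∀ (v : ℕ) (S : (Fin v → ℕ) → Prop) (F : Finset ℕ),
      (∀ w : Fin v → ℕ, Function.Injective w → (∀ t, w t ∉ F) → S w) → Lg U v S := by
  intro v
  induction v with
  | zero =>
    intro S F h
    exact h finZeroElim (fun a => a.elim0) (fun t => t.elim0)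
  | succ v ih =>
    intro S F h
    rw [Lg_succ]
    refine Filter.mem_of_superset (hfree F) ?_
    intro j hj
    refine ih _ (insert j F) ?_
    intro w hw hwF
    refine h (Fin.snoc w j) ?_ ?_
    · refine snoc_injective hw ?_
      intro t ht
      exact (hwF t) (ht ▸ Finset.mem_insert_self j F)
    · intro t
      induction t using Fin.lastCases with
      | last => rw [Fin.snoc_last]; exact hj
      | cast t' =>
        rw [Fin.snoc_castSucc]
        exact fun hmem => (hwF t') (Finset.mem_insert_of_mem hmem)

variable {L : FirstOrder.Language.{0, 0}} {M : Type} [L.Structure M] {κ : Cardinal.{0}}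

/-- Evaluation of a `v × p` matrix of variables along a choice of rows. -/
def rowV {p : ℕ} (γ : ℕ → Fin p → M) {v : ℕ} (u : Fin v → ℕ) : Fin v × Fin p → M :=
  fun q => γ (u q.1) q.2

/-- Morley-style sequence extracted from `g` by iterated `U`-limits:
realization of formulas (with parameters in `P`) along increasing tuples of the
new sequence equals iterated `U`-largeness along the original sequence. -/
theorem morley_exists (hκ : L.card + ℵ₀ < κ) (hsat : Saturated L M κ)
    (U : Ultrafilter ℕ) {p : ℕ} (g : ℕ → Fin p → M)
    (P : Set M) (hP : P.Countable) (hgP : ∀ j t, g j t ∈ P) :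
    ∃ γ : ℕ → Fin p → M,
      ∀ (v kk : ℕ) (ψ : L.Formula ((Fin v × Fin p) ⊕ Fin kk)) (par : Fin kk → M),
        (∀ t, par t ∈ P) → ∀ u : Fin v → ℕ, StrictMono u →
        (ψ.Realize (Sum.elim (rowV γ u) par) ↔
          Lg U v (fun w => ψ.Realize (Sum.elim (rowV g w) par))) := by
  classical
  -- the parameter set over a list of previously constructed tuples
  set Qset : List (Fin p → M) → Set M :=
    fun prev => P ∪ ⋃ h ∈ {h | h ∈ prev}, Set.range h with hQset
  have hQc : ∀ prev, (Qset prev).Countable := by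
    intro prev
    refine Set.Countable.union hP ?_
    exact Set.Countable.biUnion (prev.finite_toSet.countable) (fun h _ => (Set.finite_range h).countable)
  have hgQ : ∀ prev j t, g j t ∈ Qset prev := fun prev j t => Or.inl (hgP j t)
  -- the picking function
  have hpick : ∀ prev : List (Fin p → M), ∃ gh : Fin p → M,
      ∀ (kk : ℕ) (ψ : L.Formula (Fin p ⊕ Fin kk)) (par : Fin kk → M),
      (∀ t, par t ∈ Qset prev) →
      (ψ.Realize (Sum.elim gh par) ↔ {j | ψ.Realize (Sum.elim (g j) par)} ∈ U) :=
    fun prev => ulimit_exists hκ hsat U g (Qset prev) (hQc prev) (hgQ prev)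
  set pick : List (Fin p → M) → (Fin p → M) := fun prev => (hpick prev).choose with hpickdef
  -- the recursively constructed list
  set aux : ℕ → List (Fin p → M) := fun l => Nat.rec [] (fun _ ih => ih ++ [pick ih]) l with haux
  set γ : ℕ → Fin p → M := fun l => pick (aux l) with hγ
  have haux_succ : ∀ l, aux (l + 1) = aux l ++ [γ l] := fun l => rfl
  have haux_eq : ∀ l, aux l = (List.range l).map γ := by
    intro l
    induction l with
    | zero => rfl
    | succ l ih => rw [haux_succ, ih, List.range_succ, List.map_append]; rfl
  have hmemaux : ∀ {l' l : ℕ}, l' < l → γ l' ∈ aux l := by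
    intro l' l h
    rw [haux_eq]
    exact List.mem_map.2 ⟨l', List.mem_range.2 h, rfl⟩
  have hspec : ∀ (l : ℕ) (kk : ℕ) (ψ : L.Formula (Fin p ⊕ Fin kk)) (par : Fin kk → M),
      (∀ t, par t ∈ Qset (aux l)) →
      (ψ.Realize (Sum.elim (γ l) par) ↔ {j | ψ.Realize (Sum.elim (g j) par)} ∈ U) :=
    fun l => (hpick (aux l)).choose_spec
  refine ⟨γ, ?_⟩
  intro v
  induction v with
  | zero =>
    intro kk ψ par hpar u hu
    have : Sum.elim (rowV γ u) par = Sum.elim (rowV g finZeroElim) par := by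
      funext z
      rcases z with ⟨t, x⟩ | c
      · exact t.elim0
      · rfl
    rw [this, Lg_zero]
  | succ v ih =>
    intro kk ψ par hpar u hu
    -- step A : peel the last row
    set parRows : Fin (v * p) → M :=
      fun q => γ (u (Fin.castSucc (finProdFinEquiv.symm q).1)) (finProdFinEquiv.symm q).2
      with hparRows
    set EA : ((Fin (v+1) × Fin p) ⊕ Fin kk) → (Fin p ⊕ Fin (v * p + kk)) := fun z =>
      Sum.elim
        (fun q : Fin (v+1) × Fin p =>
          Fin.lastCases (Sum.inl q.2)
            (fun t' => Sum.inr (Fin.castAdd kk (finProdFinEquiv (t', q.2)))) q.1)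
        (fun c => Sum.inr (Fin.natAdd (v * p) c)) z with hEA
    set ψA : L.Formula (Fin p ⊕ Fin (v * p + kk)) := ψ.relabel EA with hψA
    -- valuation computation for ψA
    have hval : ∀ h : Fin p → M,
        (Sum.elim h (Fin.append parRows par)) ∘ EA =
          Sum.elim (fun q : Fin (v+1) × Fin p =>
            (Fin.snoc (fun t' => γ (u (Fin.castSucc t'))) h : Fin (v+1) → Fin p → M) q.1 q.2)
            par := by
      intro h
      funext z
      rcases z with ⟨t, x⟩ | c
      · induction t using Fin.lastCases with
        | last => simp [hEA, Fin.snoc_last]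
        | cast t' =>
          have hsymm := Equiv.symm_apply_apply finProdFinEquiv (t', x)
          have h1 : ((finProdFinEquiv (t', x) : Fin (v * p)).divNat) = t' :=
            congrArg Prod.fst hsymm
          have h2 : ((finProdFinEquiv (t', x) : Fin (v * p)).modNat) = x :=
            congrArg Prod.snd hsymm
          simp [hEA, Fin.snoc_castSucc, Fin.append_left, hparRows, h1, h2]
      · simp [hEA, Fin.append_right]
    have hparA : ∀ t, Fin.append parRows par t ∈ Qset (aux (u (Fin.last v))) := by
      intro t
      induction t using Fin.addCases with
      | left q =>
        rw [Fin.append_left]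
        refine Or.inr ?_
        refine Set.mem_biUnion (s := {h | h ∈ aux (u (Fin.last v))})
          (hmemaux (hu (Fin.castSucc_lt_last _))) ⟨_, rfl⟩
      | right c =>
        rw [Fin.append_right]
        exact Or.inl (hpar c)
    have hA := hspec (u (Fin.last v)) (v * p + kk) ψA (Fin.append parRows par) hparA
    -- rewrite left side
    have hLHS : ψ.Realize (Sum.elim (rowV γ u) par) ↔
        ψA.Realize (Sum.elim (γ (u (Fin.last v))) (Fin.append parRows par)) := by
      rw [hψA, Formula.realize_relabel, hval]
      have : (fun q : Fin (v+1) × Fin p =>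
          (Fin.snoc (fun t' => γ (u (Fin.castSucc t'))) (γ (u (Fin.last v)))
            : Fin (v+1) → Fin p → M) q.1 q.2) = rowV γ u := by
        funext q
        rcases q with ⟨t, x⟩
        induction t using Fin.lastCases with
        | last => simp [rowV, Fin.snoc_last]
        | cast t' => simp [rowV, Fin.snoc_castSucc]
      rw [this]
    -- step B : absorb g j as parameters
    set EB : ((Fin (v+1) × Fin p) ⊕ Fin kk) → ((Fin v × Fin p) ⊕ Fin (kk + p)) := fun z =>
      Sum.elim
        (fun q : Fin (v+1) × Fin p =>
          Fin.lastCases (Sum.inr (Fin.natAdd kk q.2))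
            (fun t' => Sum.inl (t', q.2)) q.1)
        (fun c => Sum.inr (Fin.castAdd p c)) z with hEB
    set ψB : L.Formula ((Fin v × Fin p) ⊕ Fin (kk + p)) := ψ.relabel EB with hψB
    have hvalB : ∀ (δ : ℕ → Fin p → M) (w : Fin v → ℕ) (j : ℕ),
        (Sum.elim (rowV δ w) (Fin.append par (g j))) ∘ EB =
          Sum.elim (fun q : Fin (v+1) × Fin p =>
            (Fin.snoc (fun t' => δ (w t')) (g j) : Fin (v+1) → Fin p → M) q.1 q.2) par := by
      intro δ w j
      funext z
      rcases z with ⟨t, x⟩ | c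
      · induction t using Fin.lastCases with
        | last => simp [hEB, Fin.snoc_last, Fin.append_right]
        | cast t' => simp [hEB, Fin.snoc_castSucc, rowV]
      · simp [hEB, Fin.append_left]
    have hparB : ∀ j t, Fin.append par (g j) t ∈ P := by
      intro j t
      induction t using Fin.addCases with
      | left q => rw [Fin.append_left]; exact hpar q
      | right c => rw [Fin.append_right]; exact hgP j c
    have hstepB : ∀ j : ℕ,
        ψA.Realize (Sum.elim (g j) (Fin.append parRows par)) ↔
          Lg U v (fun w => ψ.Realize (Sum.elim (rowV g (Fin.snoc w j)) par)) := by
      intro j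
      have h1 : ψA.Realize (Sum.elim (g j) (Fin.append parRows par)) ↔
          ψB.Realize (Sum.elim (rowV γ (u ∘ Fin.castSucc)) (Fin.append par (g j))) := by
        rw [hψA, hψB, Formula.realize_relabel, Formula.realize_relabel, hval, hvalB]
      have h2 := ih (kk + p) ψB (Fin.append par (g j)) (hparB j)
        (u ∘ Fin.castSucc) (hu.comp Fin.strictMono_castSucc)
      rw [h1, h2]
      refine Lg_congr U v ?_
      intro w
      rw [hψB, Formula.realize_relabel, hvalB]
      have : (fun q : Fin (v+1) × Fin p =>
          (Fin.snoc (fun t' => g (w t')) (g j) : Fin (v+1) → Fin p → M) q.1 q.2) =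
          rowV g (Fin.snoc w j) := by
        funext q
        rcases q with ⟨t, x⟩
        induction t using Fin.lastCases with
        | last => simp [rowV, Fin.snoc_last]
        | cast t' => simp [rowV, Fin.snoc_castSucc]
      rw [this]
    rw [hLHS, hA, Lg_succ]
    exact Filter.congr_sets (Filter.Eventually.of_forall fun j => by simpa using hstepB j)

end Morley
section MorleyCor

open FirstOrder.Language

variable {L : FirstOrder.Language.{0, 0}} {M : Type} [L.Structure M] {κ : Cardinal.{0}}

/-- Statement bundling what `morley_exists` gives us. -/
def MorleyChar (U : Ultrafilter ℕ) {p : ℕ} (g γ : ℕ → Fin p → M) (P : Set M) : Prop :=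
  ∀ (v kk : ℕ) (ψ : L.Formula ((Fin v × Fin p) ⊕ Fin kk)) (par : Fin kk → M),
    (∀ t, par t ∈ P) → ∀ u : Fin v → ℕ, StrictMono u →
    (ψ.Realize (Sum.elim (rowV γ u) par) ↔
      Lg U v (fun w => ψ.Realize (Sum.elim (rowV g w) par)))

theorem MorleyChar.const {U : Ultrafilter ℕ} {p : ℕ} {g γ : ℕ → Fin p → M} {P : Set M}
    (hc : MorleyChar (L := L) U g γ P) {v kk : ℕ}
    (ψ : L.Formula ((Fin v × Fin p) ⊕ Fin kk)) (par : Fin kk → M)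
    (hpar : ∀ t, par t ∈ P) {u u' : Fin v → ℕ} (hu : StrictMono u) (hu' : StrictMono u') :
    ψ.Realize (Sum.elim (rowV γ u) par) ↔ ψ.Realize (Sum.elim (rowV γ u') par) := by
  rw [hc v kk ψ par hpar u hu, hc v kk ψ par hpar u' hu']

theorem MorleyChar.of_injective {U : Ultrafilter ℕ}
    (hfree : ∀ F : Finset ℕ, {j | j ∉ F} ∈ U)
    {p : ℕ} {g γ : ℕ → Fin p → M} {P : Set M}
    (hc : MorleyChar (L := L) U g γ P) {v kk : ℕ}
    (ψ : L.Formula ((Fin v × Fin p) ⊕ Fin kk)) (par : Fin kk → M)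
    (hpar : ∀ t, par t ∈ P)
    (h : ∀ w : Fin v → ℕ, Function.Injective w → ψ.Realize (Sum.elim (rowV g w) par))
    {u : Fin v → ℕ} (hu : StrictMono u) :
    ψ.Realize (Sum.elim (rowV γ u) par) :=
  (hc v kk ψ par hpar u hu).2
    (Lg_of_forall_injective U hfree v _ ∅ (fun w hw _ => h w hw))

theorem strictMono_fin_one {u : Fin 1 → ℕ} : StrictMono u := by
  intro a b hab
  have : a = b := Subsingleton.elim a b
  exact absurd (this ▸ hab) (lt_irrefl _)

/-- One-variable-row (`v = 1`) transfer: a property of single elements constant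
along the original sequence holds along the Morley sequence. -/
theorem MorleyChar.one {U : Ultrafilter ℕ} {p : ℕ} {g γ : ℕ → Fin p → M} {P : Set M}
    (hc : MorleyChar (L := L) U g γ P) {kk : ℕ}
    (ψ : L.Formula (Fin p ⊕ Fin kk)) (par : Fin kk → M)
    (hpar : ∀ t, par t ∈ P) (C : Prop)
    (h : ∀ j, ψ.Realize (Sum.elim (g j) par) ↔ C) (l : ℕ) :
    ψ.Realize (Sum.elim (γ l) par) ↔ C := by
  set E1 : (Fin p ⊕ Fin kk) → ((Fin 1 × Fin p) ⊕ Fin kk) :=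
    Sum.map (fun x => ((0 : Fin 1), x)) id with hE1
  have hval : ∀ (δ : ℕ → Fin p → M) (u : Fin 1 → ℕ),
      (Sum.elim (rowV δ u) par) ∘ E1 = Sum.elim (δ (u 0)) par := by
    intro δ u
    funext z
    rcases z with x | c <;> rfl
  have hchar := hc 1 kk (ψ.relabel E1) par hpar (fun _ => l) strictMono_fin_one
  rw [Formula.realize_relabel, hval] at hchar
  rw [hchar]
  have hLg : Lg U 1 (fun w => (ψ.relabel E1).Realize (Sum.elim (rowV g w) par)) ↔
      {j | ψ.Realize (Sum.elim (g j) par)} ∈ U := by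
    rw [Lg_succ]
    refine Filter.congr_sets (Filter.Eventually.of_forall fun j => ?_)
    simp only [Set.mem_setOf_eq, Lg_zero, Formula.realize_relabel, hval]
    have : (Fin.snoc finZeroElim j : Fin 1 → ℕ) 0 = j := by
      simp [Fin.snoc]
    rw [this]
  rw [hLg]
  by_cases hC : C
  · have hseteq : {j | ψ.Realize (Sum.elim (g j) par)} = Set.univ :=
      Set.eq_univ_of_forall (fun j => (h j).2 hC)
    rw [hseteq]
    simp only [hC, iff_true]
    exact Filter.univ_mem
  · have hseteq : {j | ψ.Realize (Sum.elim (g j) par)} = ∅ := by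
      ext j; simp only [Set.mem_setOf_eq, Set.mem_empty_iff_false, iff_false]
      exact fun hj => hC ((h j).1 hj)
    rw [hseteq]
    simp only [hC, iff_false]
    exact Filter.empty_notMem _

theorem aut_elim_left (σ : M ≃[L] M) {α β : Type} (φ : L.Formula (α ⊕ β))
    (x : α → M) (z : β → M) :
    φ.Realize (Sum.elim x (⇑σ ∘ z)) ↔ φ.Realize (Sum.elim (⇑σ.symm ∘ x) z) := by
  have hx : x = ⇑σ ∘ (⇑σ.symm ∘ x) := by
    funext i; simp
  conv_lhs => rw [hx]
  rw [aut_realize_elim]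

end MorleyCor

section InconsFormula

open FirstOrder.Language

variable {L : FirstOrder.Language.{0, 0}} {M : Type} [L.Structure M]

/-- The formula (in `r` rows of `p` variables, with `Nt` parameter slots) saying
that `{Χ(ȳ; row_t, params)}_{t<r}` has no common solution `ȳ`. -/
noncomputable def inconsF {p Nt N' : ℕ} (Χ : L.Formula (Fin N' ⊕ Fin (p + Nt))) (r : ℕ) :
    L.Formula ((Fin r × Fin p) ⊕ Fin Nt) :=
  (exsF (((List.finRange r).map (fun t =>
    Χ.relabel (Sum.map id (Fin.addCases (fun xp => Sum.inl (t, xp)) Sum.inr)))).foldr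
      (· ⊓ ·) ⊤)).not

theorem realize_inconsF {p Nt N' : ℕ} (Χ : L.Formula (Fin N' ⊕ Fin (p + Nt))) (r : ℕ)
    (V : Fin r × Fin p → M) (β : Fin Nt → M) :
    (inconsF Χ r).Realize (Sum.elim V β) ↔
      ¬ ∃ y : Fin N' → M, ∀ t : Fin r,
        Χ.Realize (Sum.elim y (Fin.append (fun x => V (t, x)) β)) := by
  rw [inconsF, Formula.realize_not, realize_exsF]
  constructor
  · rintro h ⟨y, hy⟩
    refine h ⟨y, ?_⟩
    rw [realize_foldr_inf']
    intro φ hφ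
    rw [List.mem_map] at hφ
    obtain ⟨t, _, rfl⟩ := hφ
    rw [Formula.realize_relabel]
    convert hy t using 2
    funext z
    rcases z with w | x
    · rfl
    · induction x using Fin.addCases with
      | left xp => simp [Fin.append_left]
      | right xn => simp [Fin.append_right]
  · rintro h ⟨y, hy⟩
    refine h ⟨y, fun t => ?_⟩
    rw [realize_foldr_inf'] at hy
    have := hy _ (List.mem_map.2 ⟨t, List.mem_finRange t, rfl⟩)
    rw [Formula.realize_relabel] at this
    convert this using 2
    funext z
    rcases z with w | x
    · rfl
    · induction x using Fin.addCases with
      | left xp => simp [Fin.append_left]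
      | right xn => simp [Fin.append_right]

end InconsFormula
section Invariants

open FirstOrder.Language

theorem incons_finset_to_inj {Y : Type} {T : ℕ → Y → Prop} {k : ℕ}
    (h : ∀ s : Finset ℕ, s.card = k → ¬∃ y : Y, ∀ j ∈ s, T j y)
    {w : Fin k → ℕ} (hw : Function.Injective w) : ¬∃ y : Y, ∀ t, T (w t) y := by
  rintro ⟨y, hy⟩
  refine h (Finset.image w Finset.univ) ?_ ⟨y, ?_⟩
  · rw [Finset.card_image_of_injective _ hw, Finset.card_univ, Fintype.card_fin]
  · intro j hj
    obtain ⟨t, _, rfl⟩ := Finset.mem_image.1 hj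
    exact hy t

theorem incons_strictMono_to_finset {Y : Type} {T : ℕ → Y → Prop} {k : ℕ}
    (h : ∀ u : Fin k → ℕ, StrictMono u → ¬∃ y : Y, ∀ t, T (u t) y) :
    ∀ s : Finset ℕ, s.card = k → ¬∃ y : Y, ∀ j ∈ s, T j y := by
  rintro s hs ⟨y, hy⟩
  set u : Fin k → ℕ := fun t => ((s.orderIsoOfFin hs) t : ℕ) with hu
  have humono : StrictMono u := by
    intro a b hab
    exact_mod_cast (s.orderIsoOfFin hs).strictMono hab
  exact h u humono ⟨y, fun t => hy _ ((s.orderIsoOfFin hs) t).2⟩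

variable {L : FirstOrder.Language.{0, 0}} {M : Type} [L.Structure M]

/-- Order-indiscernibility of the sequence `γ` over parameters `β`. -/
def INV2 {p Nt : ℕ} (β : Fin Nt → M) (γ : ℕ → Fin p → M) : Prop :=
  ∀ (v : ℕ) (ψ : L.Formula ((Fin v × Fin p) ⊕ Fin Nt)) (u u' : Fin v → ℕ),
    StrictMono u → StrictMono u' →
    (ψ.Realize (Sum.elim (rowV γ u) β) ↔ ψ.Realize (Sum.elim (rowV γ u') β))

/-- `k`-inconsistency of the instances of `θ` along `γ`. -/
def INV3 {p n : ℕ} (θ : L.Formula (Fin n ⊕ Fin p)) (k : ℕ) (γ : ℕ → Fin p → M) : Prop :=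
  ∀ s : Finset ℕ, s.card = k →
    ¬∃ x : Fin n → M, ∀ j ∈ s, θ.Realize (Sum.elim x (γ j))

theorem INV2.single {p Nt : ℕ} {β : Fin Nt → M} {γ : ℕ → Fin p → M}
    (h2 : INV2 (L := L) β γ) (φ : L.Formula (Fin p ⊕ Fin Nt)) (j j' : ℕ) :
    φ.Realize (Sum.elim (γ j) β) ↔ φ.Realize (Sum.elim (γ j') β) := by
  set E1 : (Fin p ⊕ Fin Nt) → ((Fin 1 × Fin p) ⊕ Fin Nt) :=
    Sum.map (fun x => ((0 : Fin 1), x)) id with hE1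
  have hval : ∀ (jj : ℕ), (Sum.elim (rowV γ (fun _ : Fin 1 => jj)) β) ∘ E1
      = Sum.elim (γ jj) β := by
    intro jj; funext z; rcases z with x | c <;> rfl
  have := h2 1 (φ.relabel E1) (fun _ => j) (fun _ => j')
    strictMono_fin_one strictMono_fin_one
  rwa [Formula.realize_relabel, Formula.realize_relabel, hval, hval] at this

theorem INV2.pair {p Nt : ℕ} {β : Fin Nt → M} {γ : ℕ → Fin p → M}
    (h2 : INV2 (L := L) β γ) (χ : L.Formula (Fin (p + Nt))) (j j' : ℕ) :
    χ.Realize (Fin.append (γ j) β) ↔ χ.Realize (Fin.append (γ j') β) := by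
  set E5 : Fin (p + Nt) → (Fin p ⊕ Fin Nt) :=
    Fin.addCases (fun xp => Sum.inl xp) (fun xn => Sum.inr xn) with hE5
  have hval : ∀ (z : Fin p → M), (Sum.elim z β) ∘ E5 = Fin.append z β := by
    intro z; funext x
    induction x using Fin.addCases with
    | left xp => simp [hE5, Fin.append_left]
    | right xn => simp [hE5, Fin.append_right]
  have := h2.single (χ.relabel E5) j j'
  rwa [Formula.realize_relabel, Formula.realize_relabel, hval, hval] at this

/-- The `Nt = 0` inconsistency formula for `θ` itself. -/
noncomputable def incons0 {p n : ℕ} (θ : L.Formula (Fin n ⊕ Fin p)) (k : ℕ) :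
    L.Formula ((Fin k × Fin p) ⊕ Fin 0) :=
  inconsF (θ.relabel (Sum.map id (Fin.castAdd 0))) k

theorem realize_incons0 {p n : ℕ} (θ : L.Formula (Fin n ⊕ Fin p)) (k : ℕ)
    (W : Fin k × Fin p → M) :
    (incons0 θ k).Realize (Sum.elim W finZeroElim) ↔
      ¬∃ x : Fin n → M, ∀ t : Fin k, θ.Realize (Sum.elim x (fun xp => W (t, xp))) := by
  rw [incons0, realize_inconsF]
  have hval : ∀ (y : Fin n → M) (t : Fin k),
      (Sum.elim y (Fin.append (fun x => W (t, x)) finZeroElim)) ∘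
        (Sum.map id (Fin.castAdd 0)) = Sum.elim y (fun xp => W (t, xp)) := by
    intro y t; funext z
    rcases z with w | x
    · rfl
    · show Fin.append (fun x => W (t, x)) finZeroElim (Fin.castAdd 0 x) = W (t, x)
      rw [Fin.append_left]
  have hiff : ∀ (y : Fin n → M) (t : Fin k),
      (θ.relabel (Sum.map id (Fin.castAdd 0))).Realize
        (Sum.elim y (Fin.append (fun x => W (t, x)) finZeroElim)) ↔
      θ.Realize (Sum.elim y (fun xp => W (t, xp))) := by
    intro y t
    rw [Formula.realize_relabel, hval]
  constructor
  · rintro h ⟨x, hx⟩; exact h ⟨x, fun t => (hiff x t).2 (hx t)⟩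
  · rintro h ⟨x, hx⟩; exact h ⟨x, fun t => (hiff x t).1 (hx t)⟩

end Invariants
section ChainStep

open FirstOrder.Language

variable {L : FirstOrder.Language.{0, 0}} {M : Type} [L.Structure M] {κ : Cardinal.{0}}

theorem hyperfree : ∀ F : Finset ℕ, {j | j ∉ F} ∈ Filter.hyperfilter ℕ := by
  intro F
  have : {j : ℕ | j ∉ F} = (↑F : Set ℕ)ᶜ := by ext j; simp
  rw [this]
  exact Filter.compl_mem_hyperfilter_of_finite F.finite_toSet

/-- The key chain step: absorb one more block `blk` (whose type over the rest does
not divide over `∅`) into the base of the order-indiscernible sequence `γ`. -/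
theorem chain_step (hκ : L.card + ℵ₀ < κ) (hsat : Saturated L M κ)
    (hhom : StronglyHomogeneous L M κ)
    {n p N' Nt : ℕ} (θ : L.Formula (Fin n ⊕ Fin p)) (k : ℕ)
    (D : Set M) (blk : Fin N' → M)
    (hnofork : ¬ ForksOver (Tp L D blk) (∅ : Set M))
    (β : Fin Nt → M) (γ : ℕ → Fin p → M)
    (hβD : ∀ t, β t ∈ D) (hγ0D : ∀ t, γ 0 t ∈ D)
    (h2 : INV2 (L := L) β γ) (h3 : INV3 (L := L) θ k γ) :
    ∃ γ' : ℕ → Fin p → M,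
      γ' 0 = γ 0 ∧ INV2 (L := L) (Fin.append β blk) γ' ∧ INV3 (L := L) θ k γ' := by
  classical
  set U : Ultrafilter ℕ := Filter.hyperfilter ℕ with hU
  have hfree : ∀ F : Finset ℕ, {j | j ∉ F} ∈ U := hyperfree
  set cseq : ℕ → Fin (p + Nt) → M := fun j => Fin.append (γ j) β with hcseq
  set ptyp : Set (FP L M N') :=
    {F | ∃ (X : L.Formula (Fin N' ⊕ Fin (p + Nt))) (j : ℕ),
      X.Realize (Sum.elim blk (cseq 0)) ∧ F = ⟨p + Nt, (X, cseq j)⟩} with hptyp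
  set P : Set M := Set.range β ∪ ⋃ j, Set.range (γ j) with hP
  have hPc : P.Countable :=
    (Set.finite_range β).countable.union
      (Set.countable_iUnion fun j => (Set.finite_range (γ j)).countable)
  have hcseqP : ∀ j t, cseq j t ∈ P := by
    intro j t
    induction t using Fin.addCases with
    | left xp =>
      have h' : cseq j (Fin.castAdd Nt xp) = γ j xp := Fin.append_left _ _ _
      rw [h']
      exact Or.inr (Set.mem_iUnion.2 ⟨j, ⟨xp, rfl⟩⟩)
    | right xn =>
      have h' : cseq j (Fin.natAdd p xn) = β xn := Fin.append_right _ _ _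
      rw [h']
      exact Or.inl ⟨xn, rfl⟩
  have hcseq0D : ∀ t, cseq 0 t ∈ D := by
    intro t
    induction t using Fin.addCases with
    | left xp =>
      have h' : cseq 0 (Fin.castAdd Nt xp) = γ 0 xp := Fin.append_left _ _ _
      rw [h']; exact hγ0D xp
    | right xn =>
      have h' : cseq 0 (Fin.natAdd p xn) = β xn := Fin.append_right _ _ _
      rw [h']; exact hβD xn
  have hparams : ∀ F ∈ ptyp, FP.ParamsIn F P := by
    rintro F ⟨X, j, hbase, rfl⟩
    exact fun t => hcseqP j t
  -- finite satisfiability of the type of b*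
  have hfs : ∀ s : Finset (FP L M N'), ↑s ⊆ ptyp →
      ∃ y : Fin N' → M, ∀ F ∈ s, F.Realize y := by
    intro s hs
    have hdat : ∀ F : {F // F ∈ s}, ∃ (X : L.Formula (Fin N' ⊕ Fin (p + Nt))) (j : ℕ),
        X.Realize (Sum.elim blk (cseq 0)) ∧ (F : FP L M N') = ⟨p + Nt, (X, cseq j)⟩ :=
      fun F => hs F.2
    choose Xof jof hbase hFeq using hdat
    set J : Finset ℕ := Finset.image jof s.attach with hJ
    set lX : List (L.Formula (Fin N' ⊕ Fin (p + Nt))) := s.attach.toList.map Xof with hlX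
    set Xc : L.Formula (Fin N' ⊕ Fin (p + Nt)) := lX.foldr (· ⊓ ·) ⊤ with hXc
    have hcbase : Xc.Realize (Sum.elim blk (cseq 0)) := by
      rw [hXc, realize_foldr_inf']
      intro φ hφ
      rw [hlX, List.mem_map] at hφ
      obtain ⟨F, _, rfl⟩ := hφ
      exact hbase F
    have hmain : ∃ y : Fin N' → M, ∀ j ∈ J, Xc.Realize (Sum.elim y (cseq j)) := by
      by_contra hno
      push_neg at hno
      set r : ℕ := J.card with hr
      set u0 : Fin r → ℕ := fun t => ((J.orderIsoOfFin rfl) t : ℕ) with hu0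
      have hu0mono : StrictMono u0 := by
        intro a b hab
        exact_mod_cast (J.orderIsoOfFin rfl).strictMono hab
      have hbad : ¬∃ y : Fin N' → M, ∀ t : Fin r,
          Xc.Realize (Sum.elim y (cseq (u0 t))) := by
        rintro ⟨y, hy⟩
        obtain ⟨jw, hjw, hnjw⟩ := hno y
        have heq : u0 ((J.orderIsoOfFin rfl).symm ⟨jw, hjw⟩) = jw := by
          have h'' := (J.orderIsoOfFin rfl).apply_symm_apply ⟨jw, hjw⟩
          calc u0 ((J.orderIsoOfFin rfl).symm ⟨jw, hjw⟩)
              = (((J.orderIsoOfFin rfl) ((J.orderIsoOfFin rfl).symm ⟨jw, hjw⟩) : {x // x ∈ J}) : ℕ) := rfl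
            _ = ((⟨jw, hjw⟩ : {x // x ∈ J}) : ℕ) := by rw [h'']
            _ = jw := rfl
        exact hnjw (heq ▸ hy ((J.orderIsoOfFin rfl).symm ⟨jw, hjw⟩))
      have hreal0 : (inconsF Xc r).Realize (Sum.elim (rowV γ u0) β) := by
        rw [realize_inconsF]
        rintro ⟨y, hy⟩
        exact hbad ⟨y, fun t => hy t⟩
      have hallu : ∀ u : Fin r → ℕ, StrictMono u →
          ¬∃ y : Fin N' → M, ∀ t : Fin r, Xc.Realize (Sum.elim y (cseq (u t))) := by
        intro u hu
        have h' := (h2 r (inconsF Xc r) u0 u hu0mono hu).1 hreal0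
        rw [realize_inconsF] at h'
        rintro ⟨y, hy⟩
        exact h' ⟨y, fun t => hy t⟩
      refine hnofork ⟨p + Nt, Xc, cseq, r, ?_, ?_, ?_⟩
      · intro i
        exact sameType_empty_of_tpEq (fun χ => h2.pair χ i 0)
      · exact fun x hx => hx _ ⟨hcseq0D, hcbase⟩
      · exact incons_strictMono_to_finset
          (T := fun j y => Xc.Realize (Sum.elim y (cseq j))) hallu
    obtain ⟨y, hy⟩ := hmain
    refine ⟨y, fun F hF => ?_⟩
    have hfeq : F = (⟨p + Nt, (Xof ⟨F, hF⟩, cseq (jof ⟨F, hF⟩))⟩ : FP L M N') :=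
      hFeq ⟨F, hF⟩
    rw [hfeq]
    have hj : jof ⟨F, hF⟩ ∈ J := Finset.mem_image.2 ⟨⟨F, hF⟩, Finset.mem_attach _ _, rfl⟩
    have hyy := hy _ hj
    rw [hXc, realize_foldr_inf'] at hyy
    exact hyy _ (by
      rw [hlX]
      exact List.mem_map.2 ⟨⟨F, hF⟩, Finset.mem_toList.2 (Finset.mem_attach _ _), rfl⟩)
  obtain ⟨bs, hbs⟩ := hsat N' P ptyp (countable_lt_kappa hκ hPc) hparams hfs
  have hi : ∀ (j : ℕ) (X : L.Formula (Fin N' ⊕ Fin (p + Nt))),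
      X.Realize (Sum.elim blk (cseq 0)) → X.Realize (Sum.elim bs (cseq j)) :=
    fun j X h => hbs _ ⟨X, j, h, rfl⟩
  have hiff : ∀ (j : ℕ) (X : L.Formula (Fin N' ⊕ Fin (p + Nt))),
      X.Realize (Sum.elim blk (cseq 0)) ↔ X.Realize (Sum.elim bs (cseq j)) := by
    intro j X
    refine ⟨hi j X, fun h => ?_⟩
    by_contra hn
    have h' := hi j X.not (by rwa [Formula.realize_not])
    rw [Formula.realize_not] at h'
    exact h' h
  -- Morley-ize over the enlarged parameter set
  set P2 : Set M := P ∪ Set.range bs with hP2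
  have hP2c : P2.Countable := hPc.union (Set.finite_range bs).countable
  obtain ⟨γm, hchar⟩ := morley_exists hκ hsat U γ P2 hP2c
    (fun j t => Or.inl (Or.inr (Set.mem_iUnion.2 ⟨j, ⟨t, rfl⟩⟩)))
  have hchar' : MorleyChar (L := L) U γ γm P2 := hchar
  have hparP2 : ∀ t, Fin.append β bs t ∈ P2 := by
    intro t
    induction t using Fin.addCases with
    | left xp =>
      rw [Fin.append_left]; exact Or.inl (Or.inl ⟨xp, rfl⟩)
    | right xn =>
      rw [Fin.append_right]; exact Or.inr ⟨xn, rfl⟩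
  -- transfer of the b*-copies property to the Morley sequence
  set E3 : (Fin N' ⊕ Fin (p + Nt)) → (Fin p ⊕ Fin (Nt + N')) :=
    Sum.elim (fun y => Sum.inr (Fin.natAdd Nt y))
      (Fin.addCases (fun xp => Sum.inl xp) (fun xn => Sum.inr (Fin.castAdd N' xn))) with hE3
  have hvalE3 : ∀ (z : Fin p → M) (b : Fin N' → M),
      (Sum.elim z (Fin.append β b)) ∘ E3 = Sum.elim b (Fin.append z β) := by
    intro z b; funext w
    rcases w with y | x
    · simp [hE3, Fin.append_right]
    · induction x using Fin.addCases with
      | left xp => simp [hE3, Fin.append_left]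
      | right xn => simp [hE3, Fin.append_left, Fin.append_right]
  have hi2 : ∀ (l : ℕ) (X : L.Formula (Fin N' ⊕ Fin (p + Nt))),
      X.Realize (Sum.elim blk (cseq 0)) ↔ X.Realize (Sum.elim bs (Fin.append (γm l) β)) := by
    intro l X
    have hone := MorleyChar.one hchar' (X.relabel E3) (Fin.append β bs) hparP2
      (X.Realize (Sum.elim blk (cseq 0)))
      (fun j => by rw [Formula.realize_relabel, hvalE3]; exact (hiff j X).symm) l
    rw [Formula.realize_relabel, hvalE3] at hone
    exact hone.symm
  -- inconsistency along the Morley sequence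
  have h3m : ∀ u : Fin k → ℕ, StrictMono u →
      ¬∃ x : Fin n → M, ∀ t, θ.Realize (Sum.elim x (γm (u t))) := by
    intro u hu
    have hinj : ∀ w : Fin k → ℕ, Function.Injective w →
        (incons0 θ k).Realize (Sum.elim (rowV γ w) finZeroElim) := by
      intro w hw
      rw [realize_incons0]
      exact incons_finset_to_inj
        (T := fun j x => θ.Realize (Sum.elim x (γ j))) h3 hw
    have hres := MorleyChar.of_injective hfree hchar' (incons0 θ k) finZeroElim
      (fun t => t.elim0) hinj hu
    rw [realize_incons0] at hres
    exact hres
  have h3m' : INV3 (L := L) θ k γm := incons_strictMono_to_finset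
    (T := fun j x => θ.Realize (Sum.elim x (γm j))) h3m
  -- the correcting automorphism
  set T1 : Fin ((p + Nt) + N') → M := Fin.append (cseq 0) blk with hT1
  set T2 : Fin ((p + Nt) + N') → M := Fin.append (Fin.append (γm 0) β) bs with hT2
  have hTpEq : TpEq L T2 T1 := by
    intro χ
    set E4 : Fin ((p + Nt) + N') → (Fin N' ⊕ Fin (p + Nt)) :=
      Fin.addCases (fun x => Sum.inr x) (fun y => Sum.inl y) with hE4
    have hvalE4 : ∀ (z : Fin (p + Nt) → M) (b : Fin N' → M),
        (Sum.elim b z) ∘ E4 = Fin.append z b := by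
      intro z b; funext w
      induction w using Fin.addCases with
      | left x => simp [hE4, Fin.append_left]
      | right y => simp [hE4, Fin.append_right]
    have h' := hi2 0 (χ.relabel E4)
    rw [Formula.realize_relabel, Formula.realize_relabel, hvalE4, hvalE4] at h'
    exact h'.symm
  obtain ⟨σ, hσ⟩ := exists_aut_of_tpEq hhom (fun A hA => finite_lt_kappa hκ hA) hTpEq
  have hσγ : ⇑σ ∘ (γm 0) = γ 0 := by
    funext x
    have h' := congrFun hσ (Fin.castAdd N' (Fin.castAdd Nt x))
    simpa [hT1, hT2, hcseq, Fin.append_left] using h'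
  have hσβ : ∀ t, σ (β t) = β t := by
    intro t
    have h' := congrFun hσ (Fin.castAdd N' (Fin.natAdd p t))
    simpa [hT1, hT2, hcseq, Fin.append_left, Fin.append_right] using h'
  have hσb : ∀ y, σ (bs y) = blk y := by
    intro y
    have h' := congrFun hσ (Fin.natAdd (p + Nt) y)
    simpa [hT1, hT2, Fin.append_right] using h'
  refine ⟨fun j => ⇑σ ∘ γm j, hσγ, ?_, ?_⟩
  · intro v ψ u u' hu hu'
    have hval : ∀ w : Fin v → ℕ,
        Sum.elim (rowV (fun j => ⇑σ ∘ γm j) w) (Fin.append β blk)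
          = ⇑σ ∘ Sum.elim (rowV γm w) (Fin.append β bs) := by
      intro w; funext z
      rcases z with ⟨t, x⟩ | c
      · rfl
      · induction c using Fin.addCases with
        | left xp => simp [Fin.append_left, hσβ]
        | right xn => simp [Fin.append_right, hσb]
    rw [hval u, hval u', aut_realize, aut_realize]
    exact hchar'.const ψ (Fin.append β bs) hparP2 hu hu'
  · intro s hs
    rintro ⟨x, hx⟩
    refine h3m' s hs ⟨⇑σ.symm ∘ x, fun j hj => ?_⟩
    have h' := hx j hj
    rwa [aut_elim_left] at h'

end ChainStep
section InitExtract

open FirstOrder.Language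

variable {L : FirstOrder.Language.{0, 0}} {M : Type} [L.Structure M] {κ : Cardinal.{0}}

/-- Initialization: Morley-ize the raw sequence of conjugates. -/
theorem chain_init (hκ : L.card + ℵ₀ < κ) (hsat : Saturated L M κ)
    (hhom : StronglyHomogeneous L M κ)
    {n p : ℕ} (θ : L.Formula (Fin n ⊕ Fin p)) (k : ℕ)
    (e : ℕ → Fin p → M)
    (heq : ∀ j, TpEq L (e j) (e 0))
    (h3 : INV3 (L := L) θ k e) :
    ∃ γ : ℕ → Fin p → M,
      γ 0 = e 0 ∧ INV2 (L := L) (finZeroElim : Fin 0 → M) γ ∧ INV3 (L := L) θ k γ := by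
  classical
  set U : Ultrafilter ℕ := Filter.hyperfilter ℕ with hU
  have hfree : ∀ F : Finset ℕ, {j | j ∉ F} ∈ U := hyperfree
  set P : Set M := ⋃ j, Set.range (e j) with hP
  have hPc : P.Countable := Set.countable_iUnion fun j => (Set.finite_range (e j)).countable
  obtain ⟨γm, hchar⟩ := morley_exists hκ hsat U e P hPc
    (fun j t => Set.mem_iUnion.2 ⟨j, ⟨t, rfl⟩⟩)
  have hchar' : MorleyChar (L := L) U e γm P := hchar
  have htp : ∀ l, TpEq L (γm l) (e 0) := by
    intro l χ
    have hval : ∀ z : Fin p → M,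
        (Sum.elim z (finZeroElim : Fin 0 → M)) ∘ (Sum.inl : Fin p → Fin p ⊕ Fin 0) = z := by
      intro z; funext x; rfl
    have hone := MorleyChar.one hchar' (χ.relabel Sum.inl) (finZeroElim : Fin 0 → M)
      (fun t => t.elim0) (χ.Realize (e 0))
      (fun j => by rw [Formula.realize_relabel, hval]; exact heq j χ) l
    rwa [Formula.realize_relabel, hval] at hone
  obtain ⟨σ, hσ⟩ := exists_aut_of_tpEq hhom (fun A hA => finite_lt_kappa hκ hA) (htp 0)
  have h3m : ∀ u : Fin k → ℕ, StrictMono u →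
      ¬∃ x : Fin n → M, ∀ t, θ.Realize (Sum.elim x (γm (u t))) := by
    intro u hu
    have hinj : ∀ w : Fin k → ℕ, Function.Injective w →
        (incons0 θ k).Realize (Sum.elim (rowV e w) finZeroElim) := by
      intro w hw
      rw [realize_incons0]
      exact incons_finset_to_inj (T := fun j x => θ.Realize (Sum.elim x (e j))) h3 hw
    have hres := MorleyChar.of_injective hfree hchar' (incons0 θ k) finZeroElim
      (fun t => t.elim0) hinj hu
    rw [realize_incons0] at hres
    exact hres
  have h3m' : INV3 (L := L) θ k γm := incons_strictMono_to_finset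
    (T := fun j x => θ.Realize (Sum.elim x (γm j))) h3m
  refine ⟨fun j => ⇑σ ∘ γm j, hσ, ?_, ?_⟩
  · intro v ψ u u' hu hu'
    have hval : ∀ w : Fin v → ℕ,
        Sum.elim (rowV (fun j => ⇑σ ∘ γm j) w) (finZeroElim : Fin 0 → M)
          = ⇑σ ∘ Sum.elim (rowV γm w) (finZeroElim : Fin 0 → M) := by
      intro w; funext z
      rcases z with ⟨t, x⟩ | c
      · rfl
      · exact c.elim0
    rw [hval u, hval u', aut_realize, aut_realize]
    exact hchar'.const ψ finZeroElim (fun t => t.elim0) hu hu'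
  · intro s hs
    rintro ⟨x, hx⟩
    refine h3m' s hs ⟨⇑σ.symm ∘ x, fun j hj => ?_⟩
    have h' := hx j hj
    rwa [aut_elim_left] at h'

/-- Compactness: extract a single implying formula over `ci` from the entailment. -/
theorem extract_theta (hκ : L.card + ℵ₀ < κ) (hsat : Saturated L M κ)
    {n m0 p : ℕ} (a : Fin n → M) (ci : Fin p → M)
    (φ : L.Formula (Fin n ⊕ Fin m0)) (d0 : Fin m0 → M)
    (hent : Entails (Tp L (Set.range ci) a) ⟨m0, (φ, d0)⟩) :
    ∃ θ : L.Formula (Fin n ⊕ Fin p), θ.Realize (Sum.elim a ci) ∧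
      ∀ x : Fin n → M, θ.Realize (Sum.elim x ci) → φ.Realize (Sum.elim x d0) := by
  classical
  set cd : Fin (p + m0) → M := Fin.append ci d0 with hcd
  set lift1 : L.Formula (Fin n ⊕ Fin p) → L.Formula (Fin n ⊕ Fin (p + m0)) :=
    fun ψ => ψ.relabel (Sum.map id (Fin.castAdd m0)) with hlift1
  set liftφ : L.Formula (Fin n ⊕ Fin (p + m0)) :=
    φ.relabel (Sum.map id (Fin.natAdd p)) with hliftφ
  have hval1 : ∀ (x : Fin n → M), (Sum.elim x cd) ∘ (Sum.map id (Fin.castAdd m0))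
      = Sum.elim x ci := by
    intro x; funext z
    rcases z with w | xp
    · rfl
    · simp [hcd, Fin.append_left]
  have hval2 : ∀ (x : Fin n → M), (Sum.elim x cd) ∘ (Sum.map id (Fin.natAdd p))
      = Sum.elim x d0 := by
    intro x; funext z
    rcases z with w | xn
    · rfl
    · simp [hcd, Fin.append_right]
  set kind : L.Formula (Fin n ⊕ Fin p) → L.Formula (Fin n ⊕ Fin (p + m0)) :=
    fun ψ => lift1 ψ ⊓ liftφ.not with hkind
  have hkindreal : ∀ (ψ : L.Formula (Fin n ⊕ Fin p)) (x : Fin n → M),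
      (kind ψ).Realize (Sum.elim x cd) ↔
        (ψ.Realize (Sum.elim x ci) ∧ ¬φ.Realize (Sum.elim x d0)) := by
    intro ψ x
    rw [hkind, Formula.realize_inf, Formula.realize_not, hlift1, hliftφ,
      Formula.realize_relabel, Formula.realize_relabel, hval1, hval2]
  set ptyp : Set (FP L M n) := {F | ∃ ψ : L.Formula (Fin n ⊕ Fin p),
    ψ.Realize (Sum.elim a ci) ∧ F = ⟨p + m0, (ψ |> kind, cd)⟩} with hptyp
  set Apar : Set M := Set.range ci ∪ Set.range d0 with hApar
  have hcdA : ∀ t, cd t ∈ Apar := by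
    intro t
    induction t using Fin.addCases with
    | left xp =>
      have h' : cd (Fin.castAdd m0 xp) = ci xp := Fin.append_left _ _ _
      rw [h']; exact Or.inl ⟨xp, rfl⟩
    | right xn =>
      have h' : cd (Fin.natAdd p xn) = d0 xn := Fin.append_right _ _ _
      rw [h']; exact Or.inr ⟨xn, rfl⟩
  have hparams : ∀ F ∈ ptyp, FP.ParamsIn F Apar := by
    rintro F ⟨ψ, hψ, rfl⟩
    exact fun t => hcdA t
  by_cases hall : ∀ s : Finset (FP L M n), ↑s ⊆ ptyp → ∃ x : Fin n → M, ∀ F ∈ s, F.Realize x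
  · exfalso
    obtain ⟨as, has⟩ := hsat n Apar ptyp
      (countable_lt_kappa hκ (((Set.finite_range ci).union (Set.finite_range d0)).countable))
      hparams hall
    have hk : ∀ ψ : L.Formula (Fin n ⊕ Fin p), ψ.Realize (Sum.elim a ci) →
        ψ.Realize (Sum.elim as ci) ∧ ¬φ.Realize (Sum.elim as d0) := by
      intro ψ hψ
      have := has _ ⟨ψ, hψ, rfl⟩
      rwa [show FP.Realize (⟨p + m0, (kind ψ, cd)⟩ : FP L M n) as =
        (kind ψ).Realize (Sum.elim as cd) from rfl, hkindreal] at this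
    have hTp : ∀ G ∈ Tp L (Set.range ci) a, FP.Realize G as := by
      rintro ⟨kk, χ, cc⟩ ⟨hpar, hreal⟩
      have hchoice : ∀ t, ∃ i, ci i = cc t := fun t => hpar t
      choose gm hgm using hchoice
      have hce : ci ∘ gm = cc := funext hgm
      have hψa : (χ.relabel (Sum.map id gm)).Realize (Sum.elim a ci) := by
        rw [Formula.realize_relabel]
        have : (Sum.elim a ci) ∘ (Sum.map id gm) = Sum.elim a cc := by
          funext z; rcases z with w | t
          · rfl
          · simp [hgm]
        rwa [this]
      have := (hk _ hψa).1
      rw [Formula.realize_relabel] at this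
      have hval : (Sum.elim as ci) ∘ (Sum.map id gm) = Sum.elim as cc := by
        funext z; rcases z with w | t
        · rfl
        · simp [hgm]
      rw [hval] at this
      exact this
    have hφas : φ.Realize (Sum.elim as d0) := hent as hTp
    exact (hk ⊤ (by rw [Formula.realize_top]; trivial)).2 hφas
  · push_neg at hall
    obtain ⟨s, hs, hnos⟩ := hall
    have hdat : ∀ F : {F // F ∈ s}, ∃ ψ : L.Formula (Fin n ⊕ Fin p),
        ψ.Realize (Sum.elim a ci) ∧ (F : FP L M n) = ⟨p + m0, (kind ψ, cd)⟩ :=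
      fun F => hs F.2
    choose ψof hψa hFeq using hdat
    set lψ : List (L.Formula (Fin n ⊕ Fin p)) := s.attach.toList.map ψof with hlψ
    set θ : L.Formula (Fin n ⊕ Fin p) := lψ.foldr (· ⊓ ·) ⊤ with hθ
    refine ⟨θ, ?_, ?_⟩
    · rw [hθ, realize_foldr_inf']
      intro ψ hψ
      rw [hlψ, List.mem_map] at hψ
      obtain ⟨F, _, rfl⟩ := hψ
      exact hψa F
    · intro x hx
      by_contra hnφ
      obtain ⟨F, hF, hnF⟩ := hnos x
      refine hnF ?_
      have hfeq : F = (⟨p + m0, (kind (ψof ⟨F, hF⟩), cd)⟩ : FP L M n) := hFeq ⟨F, hF⟩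
      rw [hfeq]
      rw [show FP.Realize (⟨p + m0, (kind (ψof ⟨F, hF⟩), cd)⟩ : FP L M n) x =
        (kind (ψof ⟨F, hF⟩)).Realize (Sum.elim x cd) from rfl, hkindreal]
      refine ⟨?_, hnφ⟩
      rw [hθ, realize_foldr_inf'] at hx
      exact hx _ (by
        rw [hlψ]
        exact List.mem_map.2 ⟨⟨F, hF⟩, Finset.mem_toList.2 (Finset.mem_attach _ _), rfl⟩)

/-- Translate the forking witness into conjugates of `ci` via automorphisms. -/
theorem translate_witness (hκ : L.card + ℵ₀ < κ) (hhom : StronglyHomogeneous L M κ)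
    {n m0 p k : ℕ} (φ : L.Formula (Fin n ⊕ Fin m0)) (d : ℕ → Fin m0 → M)
    (ci : Fin p → M) (θ : L.Formula (Fin n ⊕ Fin p))
    (hsame : ∀ i, SameType L (∅ : Set M) (d i) (d 0))
    (hθφ : ∀ x : Fin n → M, θ.Realize (Sum.elim x ci) → φ.Realize (Sum.elim x (d 0)))
    (hinc : ∀ s : Finset ℕ, s.card = k →
      ¬∃ x : Fin n → M, ∀ i ∈ s, φ.Realize (Sum.elim x (d i))) :
    ∃ e : ℕ → Fin p → M, e 0 = ci ∧ (∀ j, TpEq L (e j) ci) ∧ INV3 (L := L) θ k e := by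
  classical
  have hσ : ∀ j : ℕ, ∃ σ : M ≃[L] M, ⇑σ ∘ (d 0) = d j := by
    intro j
    have h1 : TpEq L (d j) (d 0) := tpEq_of_sameType_empty (hsame j)
    exact exists_aut_of_tpEq hhom (fun A hA => finite_lt_kappa hκ hA)
      (fun χ => (h1 χ).symm)
  choose σs hσs using hσ
  set e : ℕ → Fin p → M := fun j => if j = 0 then ci else ⇑(σs j) ∘ ci with he
  have he0 : e 0 = ci := by rw [he]; simp
  refine ⟨e, he0, ?_, ?_⟩
  · intro j χ
    by_cases hj : j = 0
    · rw [he]; simp [hj]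
    · rw [he]; simp only [hj, if_neg hj, ite_false]
      exact aut_realize (σs j) χ ci
  · intro s hs
    rintro ⟨x, hx⟩
    refine hinc s hs ⟨x, fun j hj => ?_⟩
    have hxj := hx j hj
    by_cases hj0 : j = 0
    · subst hj0
      rw [he0] at hxj
      exact hθφ x hxj
    · have hxj' : θ.Realize (Sum.elim x (⇑(σs j) ∘ ci)) := by
        rw [he] at hxj; simpa [hj0] using hxj
      rw [aut_elim_left] at hxj'
      have hφ' := hθφ _ hxj'
      have : φ.Realize (Sum.elim x (⇑(σs j) ∘ d 0)) := by
        rw [aut_elim_left]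
        exact hφ'
      rwa [hσs j] at this
  
/-- Produce `SameType` over `A` from agreement over an enumeration of `A`. -/
theorem sameType_of_params {p N : ℕ} (β : Fin N → M) (A : Set M)
    (hA : ∀ x ∈ A, x ∈ Set.range β) {x y : Fin p → M}
    (h : ∀ φ : L.Formula (Fin p ⊕ Fin N),
      φ.Realize (Sum.elim x β) ↔ φ.Realize (Sum.elim y β)) :
    SameType L A x y := by
  intro kk φ c hc
  have hchoice : ∀ t, ∃ i, β i = c t := fun t => hA _ (hc t)
  choose gm hgm using hchoice
  have h' := h (φ.relabel (Sum.map id gm))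
  rw [Formula.realize_relabel, Formula.realize_relabel] at h'
  have hvx : (Sum.elim x β) ∘ (Sum.map id gm) = Sum.elim x c := by
    funext z; rcases z with w | t
    · rfl
    · simp [hgm]
  have hvy : (Sum.elim y β) ∘ (Sum.map id gm) = Sum.elim y c := by
    funext z; rcases z with w | t
    · rfl
    · simp [hgm]
  rwa [hvx, hvy] at h'

end InitExtract
section Fold

open FirstOrder.Language

variable {L : FirstOrder.Language.{0, 0}} {M : Type} [L.Structure M] {κ : Cardinal.{0}}

theorem fold_blocks (hκ : L.card + ℵ₀ < κ) (hsat : Saturated L M κ)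
    (hhom : StronglyHomogeneous L M κ)
    {n p : ℕ} (θ : L.Formula (Fin n ⊕ Fin p)) (k : ℕ)
    {mfam : ℕ → ℕ} (cfam : (i : ℕ) → Fin (mfam i) → M)
    (hindep : IndepFamily L (∅ : Set M) (fun i => Set.range (cfam i)))
    (i0 : ℕ) (ci : Fin p → M) (hci : ∀ t, ci t ∈ Set.range (cfam i0))
    (bs : ℕ → Finset M) (hbs : ∀ j, ∀ x ∈ bs j, x ∈ Set.range (cfam j)) :
    ∀ (ls : List ℕ), ls.Nodup → (∀ j ∈ ls, j ≠ i0) →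
    ∀ (Nt : ℕ) (β : Fin Nt → M) (γ : ℕ → Fin p → M),
      γ 0 = ci → INV2 (L := L) β γ → INV3 (L := L) θ k γ →
      (∀ t, ∃ j', j' ≠ i0 ∧ j' ∉ ls ∧ β t ∈ Set.range (cfam j')) →
      ∃ (Nt' : ℕ) (β' : Fin Nt' → M) (γ' : ℕ → Fin p → M),
        γ' 0 = ci ∧ INV2 (L := L) β' γ' ∧ INV3 (L := L) θ k γ' ∧
        (∀ j ∈ ls, ∀ x ∈ bs j, x ∈ Set.range β') ∧
        Set.range β ⊆ Set.range β' := by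
  intro ls
  induction ls with
  | nil =>
    intro _ _ Nt β γ hγ0 h2 h3 _
    exact ⟨Nt, β, γ, hγ0, h2, h3, fun j hj => absurd hj List.not_mem_nil, subset_rfl⟩
  | cons j0 tl ih =>
    intro hnd hneq Nt β γ hγ0 h2 h3 hside
    classical
    set lb : List M := (bs j0).toList with hlb
    set Nb : ℕ := lb.length with hNb
    set bl : Fin Nb → M := fun t => lb.get t with hbl
    have hblk : ∀ t, bl t ∈ Set.range (cfam j0) :=
      fun t => hbs j0 _ (Finset.mem_toList.1 (lb.get_mem t))
    set D : Set M := (∅ : Set M) ∪ ⋃ (j) (_ : j ≠ j0), Set.range (cfam j) with hD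
    have hnofork : ¬ ForksOver (Tp L D bl) (∅ : Set M) := hindep j0 Nb bl hblk
    have hβD : ∀ t, β t ∈ D := by
      intro t
      obtain ⟨j', hne, hnotin, hmem⟩ := hside t
      have hj0 : j' ≠ j0 := fun h => hnotin (h ▸ List.mem_cons_self (a := j0) (l := tl))
      exact Or.inr (Set.mem_iUnion.2 ⟨j', Set.mem_iUnion.2 ⟨hj0, hmem⟩⟩)
    have hciD : ∀ t, γ 0 t ∈ D := by
      intro t
      rw [hγ0]
      have hij : i0 ≠ j0 := fun h => (hneq j0 (List.mem_cons_self (a := j0) (l := tl))) h.symm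
      exact Or.inr (Set.mem_iUnion.2 ⟨i0, Set.mem_iUnion.2 ⟨hij, hci t⟩⟩)
    obtain ⟨γ2, hγ2, h2', h3'⟩ :=
      chain_step hκ hsat hhom θ k D bl hnofork β γ hβD hciD h2 h3
    have hγ20 : γ2 0 = ci := hγ2.trans hγ0
    have hside' : ∀ t : Fin (Nt + Nb), ∃ j', j' ≠ i0 ∧ j' ∉ tl ∧
        Fin.append β bl t ∈ Set.range (cfam j') := by
      intro t
      induction t using Fin.addCases with
      | left xp =>
        obtain ⟨j', hne, hnotin, hmem⟩ := hside xp
        refine ⟨j', hne, fun h => hnotin (List.mem_cons_of_mem _ h), ?_⟩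
        rwa [Fin.append_left]
      | right xn =>
        refine ⟨j0, hneq j0 (List.mem_cons_self (a := j0) (l := tl)), (List.nodup_cons.1 hnd).1, ?_⟩
        rw [Fin.append_right]
        exact hblk xn
    obtain ⟨Nt', β', γ', hγ'0, h2'', h3'', hcov, hrng⟩ :=
      ih (List.nodup_cons.1 hnd).2 (fun j hj => hneq j (List.mem_cons_of_mem _ hj))
        (Nt + Nb) (Fin.append β bl) γ2 hγ20 h2' h3' hside'
    refine ⟨Nt', β', γ', hγ'0, h2'', h3'', ?_, ?_⟩
    · intro j hj x hx
      rcases List.mem_cons.1 hj with rfl | hj'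
      · -- x ∈ bs j0, so x appears in lb
        have hxl : x ∈ lb := Finset.mem_toList.2 hx
        obtain ⟨t, hget⟩ := List.mem_iff_get.1 hxl
        refine hrng ⟨Fin.natAdd Nt t, ?_⟩
        rw [Fin.append_right]
        exact hget
      · exact hcov j hj' x hx
    · intro x hx
      obtain ⟨t, rfl⟩ := hx
      refine hrng ⟨Fin.castAdd Nb t, ?_⟩
      rw [Fin.append_left]

end Fold
/-- Assume `T` is supersimple.  Then there is no finite tuple `a` together with
an independent (over `∅`) family of tuples `{c i | i < ω}` such that
`tp(a/c i)` forks over `∅` for every `i`. -/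
theorem supersimple_no_independent_forking_family
    (L : FirstOrder.Language.{0, 0}) (M : Type) [L.Structure M]
    (κ : Cardinal.{0}) (hκ : L.card + ℵ₀ < κ)
    (hsat : Saturated L M κ) (hhom : StronglyHomogeneous L M κ)
    (hss : SupersimpleStruct L M) :
    ¬ ∃ (n : ℕ) (a : Fin n → M) (m : ℕ → ℕ) (c : (i : ℕ) → Fin (m i) → M),
      IndepFamily L (∅ : Set M) (fun i => Set.range (c i)) ∧
      ∀ i : ℕ, ForksOver (Tp L (Set.range (c i)) a) ∅ := by
  rintro ⟨n, a, mfam, cfam, hindep, hforks⟩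
  classical
  set B : Set M := ⋃ j, Set.range (cfam j) with hB
  obtain ⟨A, hAB, hAfin, hnoforkA⟩ := hss n B a
  have hcover' : ∀ x : M, ∃ j, x ∈ A → x ∈ Set.range (cfam j) := by
    intro x
    by_cases hx : x ∈ A
    · obtain ⟨j, hj⟩ := Set.mem_iUnion.1 (hAB hx)
      exact ⟨j, fun _ => hj⟩
    · exact ⟨0, fun h => absurd h hx⟩
  choose jf hjf using hcover'
  set Afin : Finset M := hAfin.toFinset with hAfin'
  set sIdx : Finset ℕ := Afin.image jf with hsIdx
  obtain ⟨i0, hi0⟩ := Infinite.exists_notMem_finset sIdx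
  obtain ⟨m0, φ, d, k, hsame, hent, hinc⟩ := hforks i0
  obtain ⟨θ, hθa, hθφ⟩ := extract_theta hκ hsat a (cfam i0) φ (d 0) hent
  obtain ⟨e, he0, heqp, h3e⟩ := translate_witness hκ hhom φ d (cfam i0) θ hsame hθφ hinc
  obtain ⟨γ0, hγ00, h2i, h3i⟩ := chain_init hκ hsat hhom θ k e
    (fun j χ => by rw [he0]; exact heqp j χ) h3e
  set bs : ℕ → Finset M := fun j => Afin.filter (fun x => jf x = j) with hbs
  have hbsmem : ∀ j, ∀ x ∈ bs j, x ∈ Set.range (cfam j) := by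
    intro j x hx
    rw [hbs, Finset.mem_filter] at hx
    have hxA : x ∈ A := hAfin.mem_toFinset.1 hx.1
    have h' := hjf x hxA
    rwa [hx.2] at h'
  have hneq : ∀ j ∈ sIdx.toList, j ≠ i0 :=
    fun j hj h => hi0 (h ▸ Finset.mem_toList.1 hj)
  obtain ⟨Nt', β', γ', hγ'0, h2', h3', hcov, hrng⟩ :=
    fold_blocks hκ hsat hhom θ k cfam hindep i0 (cfam i0) (fun t => ⟨t, rfl⟩) bs hbsmem
      sIdx.toList (Finset.nodup_toList _) hneq 0 finZeroElim γ0 (hγ00.trans he0) h2i h3i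
      (fun t => t.elim0)
  refine hnoforkA ⟨mfam i0, θ, γ', k, ?_, ?_, ?_⟩
  · intro i
    refine sameType_of_params β' A ?_ (fun φ' => h2'.single φ' i 0)
    intro x hx
    have hxl : jf x ∈ sIdx.toList :=
      Finset.mem_toList.2 (Finset.mem_image.2 ⟨x, hAfin.mem_toFinset.2 hx, rfl⟩)
    refine hcov (jf x) hxl x ?_
    rw [hbs, Finset.mem_filter]
    exact ⟨hAfin.mem_toFinset.2 hx, rfl⟩
  · intro x hx
    refine hx _ ⟨?_, ?_⟩
    · intro t
      have h' : γ' 0 t = cfam i0 t := congrFun hγ'0 t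
      rw [show (⟨mfam i0, (θ, γ' 0)⟩ : FP L M n).2.2 t = γ' 0 t from rfl, h']
      exact Set.mem_iUnion.2 ⟨i0, ⟨t, rfl⟩⟩
    · show θ.Realize (Sum.elim a (γ' 0))
      rw [hγ'0]
      exact hθa
  · exact h3'

end KimPaper
end

section
/- Let L be the language with a single unary function symbol S, and let M be the L-structure with universe ℤ × {0,1} where S(n,i) = (n+1,i). Then M is elementarily equivalent to the structure (ℤ, x ↦ x+1), and for the elements a = (0,0) and b = (0,1) of M (which lie in different S-chains), the type tp(b/a) is semi-isolated but not isolated. -/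
open FirstOrder Cardinal

namespace KimPaper

/-- The language with a single unary function symbol `S`. -/
def LS : FirstOrder.Language.{0, 0} :=
  ⟨fun n => match n with | 1 => Unit | _ => Empty, fun _ => Empty⟩

/-- The structure `ℤ × {0, 1}`: two disjoint `S`-chains. -/
abbrev MS : Type := ℤ × Fin 2

noncomputable instance : LS.Structure MS where
  funMap {n} f x :=
    match n, f with
    | 1, _ => ((x 0).1 + 1, (x 0).2)
  RelMap {n} r _ := nomatch r

noncomputable instance : LS.Structure ℤ where
  funMap {n} f x :=
    match n, f with
    | 1, _ => x 0 + 1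
  RelMap {n} r _ := nomatch r

/-- `tp(b/a)` is semi-isolated: there is a formula `φ(x̄, a)` realized by `b`
such that every tuple satisfying `φ(x̄, a)` in any elementary extension of `M`
realizes `tp(b)`. -/
def SemiIsolatedExt (L : FirstOrder.Language.{0, 0}) {M : Type} [L.Structure M]
    {n m : ℕ} (b : Fin n → M) (a : Fin m → M) : Prop :=
  ∃ φ : L.Formula (Fin n ⊕ Fin m), φ.Realize (Sum.elim b a) ∧
    ∀ (N : Type) [L.Structure N], ∀ (g : M ↪ₑ[L] N) (b' : Fin n → N),
      φ.Realize (Sum.elim b' (g ∘ a)) →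
      ∀ ψ : L.Formula (Fin n), ψ.Realize b → ψ.Realize b'

/-- `tp(b/a)` is isolated: there is a formula `φ(x̄, a)` realized by `b` such
that every tuple satisfying `φ(x̄, a)` in any elementary extension of `M`
realizes all of `tp(b/a)`. -/
def IsolatedExt (L : FirstOrder.Language.{0, 0}) {M : Type} [L.Structure M]
    {n m : ℕ} (b : Fin n → M) (a : Fin m → M) : Prop :=
  ∃ φ : L.Formula (Fin n ⊕ Fin m), φ.Realize (Sum.elim b a) ∧
    ∀ (N : Type) [L.Structure N], ∀ (g : M ↪ₑ[L] N) (b' : Fin n → N),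
      φ.Realize (Sum.elim b' (g ∘ a)) →
      ∀ ψ : L.Formula (Fin n ⊕ Fin m),
        ψ.Realize (Sum.elim b a) → ψ.Realize (Sum.elim b' (g ∘ a))

abbrev G (C : Type) : Type := C × ℤ

noncomputable instance instGStructure (C : Type) : LS.Structure (G C) where
  funMap {n} f x :=
    match n, f with
    | 1, _ => (((x 0 : C × ℤ).1, (x 0 : C × ℤ).2 + 1) : C × ℤ)
  RelMap {n} r _ := nomatch r

def tVar {β : Type} : LS.Term β → β
  | .var i => i
  | @FirstOrder.Language.Term.func _ _ 0 f _ => nomatch f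
  | @FirstOrder.Language.Term.func _ _ 1 _ ts => tVar (ts 0)
  | @FirstOrder.Language.Term.func _ _ (_+2) f _ => nomatch f

def tDeg {β : Type} : LS.Term β → ℕ
  | .var _ => 0
  | @FirstOrder.Language.Term.func _ _ 0 f _ => nomatch f
  | @FirstOrder.Language.Term.func _ _ 1 _ ts => tDeg (ts 0) + 1
  | @FirstOrder.Language.Term.func _ _ (_+2) f _ => nomatch f

lemma funMap_G {C : Type} (f : LS.Functions 1) (x : Fin 1 → G C) :
    Language.Structure.funMap f x = (((x 0).1, (x 0).2 + 1) : C × ℤ) := rfl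

lemma realize_term_G {β C : Type} (T : LS.Term β) (u : β → G C) :
    T.realize u = (((u (tVar T)).1, (u (tVar T)).2 + (tDeg T : ℤ)) : C × ℤ) := by
  induction T with
  | var i => simp [tVar, tDeg]
  | @func l f ts ih =>
    rcases l with _ | _ | l
    · exact (nomatch f)
    · rw [show tVar (Language.Term.func f ts) = tVar (ts 0) from rfl,
        show tDeg (Language.Term.func f ts) = tDeg (ts 0) + 1 from rfl]
      simp only [Language.Term.realize, funMap_G, ih 0]
      push_cast; ring_nf
    · exact (nomatch f)


open scoped Classical in
/-- Truncated distance between two points of `G C`. -/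
noncomputable def τ {C : Type} (t : ℕ) (p q : G C) : Option ℤ :=
  if (p : C × ℤ).1 = (q : C × ℤ).1 ∧ ((q : C × ℤ).2 - (p : C × ℤ).2).natAbs ≤ t
  then some ((q : C × ℤ).2 - (p : C × ℤ).2) else none

lemma τ_eq_some_iff {C : Type} {t : ℕ} {p q : G C} {d : ℤ} :
    τ t p q = some d ↔ ((p : C × ℤ).1 = (q : C × ℤ).1 ∧ (q : C × ℤ).2 - (p : C × ℤ).2 = d ∧ d.natAbs ≤ t) := by
  unfold τ; split_ifs with h
  · simp only [Option.some.injEq]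
    constructor
    · rintro rfl; exact ⟨h.1, rfl, h.2⟩
    · rintro ⟨_, rfl, _⟩; rfl
  · simp only [false_iff]; rintro ⟨h1, rfl, h3⟩; exact h ⟨h1, h3⟩

lemma τ_eq_none_iff {C : Type} {t : ℕ} {p q : G C} :
    τ t p q = none ↔ ((p : C × ℤ).1 ≠ (q : C × ℤ).1 ∨ t < ((q : C × ℤ).2 - (p : C × ℤ).2).natAbs) := by
  unfold τ; split_ifs with h
  · simp only [reduceCtorEq, false_iff]; push_neg; exact ⟨h.1, by omega⟩
  · simp only [true_iff]; by_cases h1 : (p : C × ℤ).1 = (q : C × ℤ).1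
    · right; by_contra h2; exact h ⟨h1, by omega⟩
    · left; exact h1

lemma τ_self {C : Type} (t : ℕ) (p : G C) : τ t p p = some 0 := by
  simp [τ]

lemma τ_swap {C : Type} (t : ℕ) (p q : G C) : τ t q p = (τ t p q).map (fun d => -d) := by
  unfold τ; by_cases h1 : (p : C × ℤ).1 = (q : C × ℤ).1
  · by_cases h2 : (((q : C × ℤ).2 - (p : C × ℤ).2)).natAbs ≤ t
    · rw [if_pos ⟨h1.symm, by omega⟩, if_pos ⟨h1, h2⟩]; simp only [Option.map_some]; ring_nf
    · rw [if_neg (by rintro ⟨a, b⟩; omega), if_neg (by rintro ⟨a, b⟩; omega)]; rfl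
  · rw [if_neg (by rintro ⟨a, b⟩; exact h1 a.symm), if_neg (by rintro ⟨a, b⟩; exact h1 a)]; rfl

lemma τ_trunc {C : Type} {s t : ℕ} (h : s ≤ t) (p q : G C) :
    τ s p q = (τ t p q).bind (fun d => if d.natAbs ≤ s then some d else none) := by
  unfold τ; by_cases h1 : (p : C × ℤ).1 = (q : C × ℤ).1
  · by_cases h2 : (((q : C × ℤ).2 - (p : C × ℤ).2)).natAbs ≤ s
    · rw [if_pos ⟨h1, h2⟩, if_pos ⟨h1, by omega⟩]; simp [h2]
    · rw [if_neg (by rintro ⟨a,b⟩; omega)]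
      by_cases h3 : (((q : C × ℤ).2 - (p : C × ℤ).2)).natAbs ≤ t
      · rw [if_pos ⟨h1, h3⟩]; simp [h2]
      · rw [if_neg (by rintro ⟨a,b⟩; omega)]; rfl
  · rw [if_neg (by rintro ⟨a,b⟩; exact h1 a), if_neg (by rintro ⟨a,b⟩; exact h1 a)]; rfl

/-- EF-equivalence of two assignments at threshold `t`. -/
def E {ι C D : Type} (t : ℕ) (x : ι → G C) (y : ι → G D) : Prop :=
  ∀ i j, τ t (x i) (x j) = τ t (y i) (y j)

lemma E.symm {ι C D : Type} {t : ℕ} {x : ι → G C} {y : ι → G D} (h : E t x y) : E t y x :=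
  fun i j => (h i j).symm

lemma E.mono {ι C D : Type} {s t : ℕ} (hst : s ≤ t) {x : ι → G C} {y : ι → G D}
    (h : E t x y) : E s x y := by
  intro i j
  rw [τ_trunc hst, τ_trunc hst, h i j]


/-- Degree bound for the EF argument. -/
def B {α : Type} : ∀ {n : ℕ}, LS.BoundedFormula α n → ℕ
  | _, .falsum => 0
  | _, .equal t₁ t₂ => tDeg t₁ + tDeg t₂
  | _, .rel r _ => nomatch r
  | _, .imp f g => max (B f) (B g)
  | _, .all f => 3 * B f + 1

/-- The extension step of the back-and-forth argument. -/
lemma extend_E {ι C D : Type} [Finite ι] [Nonempty C] (t : ℕ) (x : ι → G C) (y : ι → G D)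
    (h : E (3 * t + 1) x y) (b : G D) :
    ∃ a : G C, ∀ i, τ t (x i) a = τ t (y i) b := by
  by_cases hc : ∃ i d, τ t (y i) b = some d
  · obtain ⟨i, d, hd⟩ := hc
    rw [τ_eq_some_iff] at hd
    obtain ⟨hd1, hd2, hd3⟩ := hd
    refine ⟨(((x i).1, (x i).2 + d) : C × ℤ), fun j => ?_⟩
    rcases hcase : τ (3 * t + 1) (x j) (x i) with _ | e
    · have h' := (h j i).symm.trans hcase
      rw [τ_eq_none_iff] at hcase h'
      rw [τ_eq_none_iff.2, (τ_eq_none_iff (p := y j)).2]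
      · rcases h' with h' | h'
        · left; intro hcon; exact h' (hcon.trans hd1.symm)
        · right; omega
      · rcases hcase with h' | h'
        · left; exact h'
        · right; simp only []; omega
    · have h' := (h j i).symm.trans hcase
      rw [τ_eq_some_iff] at hcase h'
      obtain ⟨hx1, hx2, hx3⟩ := hcase
      obtain ⟨hy1, hy2, hy3⟩ := h'
      by_cases hle : (e + d).natAbs ≤ t
      · rw [(τ_eq_some_iff (p := x j) (q := (((x i).1, (x i).2 + d) : C × ℤ)) (d := e + d)).2
            ⟨hx1, by simp only []; omega, hle⟩,
          (τ_eq_some_iff (p := y j) (q := b) (d := e + d)).2 ⟨hy1.trans hd1, by omega, hle⟩]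
      · rw [(τ_eq_none_iff (p := x j) (q := (((x i).1, (x i).2 + d) : C × ℤ))).2
            (Or.inr (by simp only []; omega)),
          (τ_eq_none_iff (p := y j) (q := b)).2 (Or.inr (by omega))]
  · push_neg at hc
    have hnone : ∀ i, τ t (y i) b = none := by
      intro i
      rcases hy : τ t (y i) b with _ | d
      · rfl
      · exact absurd hy (hc i d)
    obtain ⟨N, hN⟩ := (Set.finite_range fun i => (x i).2).bddAbove
    refine ⟨((Classical.arbitrary C, N + t + 1) : C × ℤ), fun j => ?_⟩
    rw [hnone j, τ_eq_none_iff.2 (Or.inr ?_)]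
    have : (x j).2 ≤ N := hN ⟨j, rfl⟩
    simp only []
    omega

/-- Extending EF-equivalent assignments by matching elements preserves equivalence. -/
lemma E_snoc {α C D : Type} {n : ℕ} {t : ℕ} {v : α → G C} {xs : Fin n → G C}
    {w : α → G D} {ys : Fin n → G D} {a : G C} {b : G D}
    (hold : E t (Sum.elim v xs) (Sum.elim w ys))
    (hnew : ∀ i, τ t (Sum.elim v xs i) a = τ t (Sum.elim w ys i) b) :
    E t (Sum.elim v (Fin.snoc xs a)) (Sum.elim w (Fin.snoc ys b)) := by
  have key : ∀ i : α ⊕ Fin (n + 1),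
      (Sum.elim v (Fin.snoc xs a) i = a ∧ Sum.elim w (Fin.snoc ys b) i = b) ∨
      (∃ i₀ : α ⊕ Fin n, Sum.elim v (Fin.snoc xs a) i = Sum.elim v xs i₀ ∧
        Sum.elim w (Fin.snoc ys b) i = Sum.elim w ys i₀) := by
    rintro (i | fi)
    · exact Or.inr ⟨Sum.inl i, rfl, rfl⟩
    · refine Fin.lastCases ?_ (fun j => ?_) fi
      · exact Or.inl ⟨by simp, by simp⟩
      · exact Or.inr ⟨Sum.inr j, by simp, by simp⟩
  intro i j
  rcases key i with ⟨hi1, hi2⟩ | ⟨i₀, hi1, hi2⟩ <;> rcases key j with ⟨hj1, hj2⟩ | ⟨j₀, hj1, hj2⟩ <;>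
    rw [hi1, hi2, hj1, hj2]
  · rw [τ_self, τ_self]
  · rw [τ_swap t (Sum.elim v xs j₀) a, τ_swap t (Sum.elim w ys j₀) b, hnew j₀]
  · exact hnew i₀
  · exact hold i₀ j₀

/-- The main Ehrenfeucht–Fraïssé transfer lemma for `LS`-structures of the form `C × ℤ`. -/
theorem ef_main {α : Type} [Finite α] {C D : Type} [Nonempty C] [Nonempty D] {n : ℕ}
    (φ : LS.BoundedFormula α n) (v : α → G C) (w : α → G D) :
    ∀ (xs : Fin n → G C) (ys : Fin n → G D) (t : ℕ), B φ ≤ t →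
      E t (Sum.elim v xs) (Sum.elim w ys) → (φ.Realize v xs ↔ φ.Realize w ys) := by
  induction φ with
  | falsum => intro xs ys t hB hE; simp [Language.BoundedFormula.Realize]
  | equal t₁ t₂ =>
    intro xs ys t hB hE
    simp only [Language.BoundedFormula.Realize, realize_term_G]
    have hBle : tDeg t₁ + tDeg t₂ ≤ t := hB
    have key : ∀ {C' : Type} (u : (α ⊕ Fin _) → G C'),
        ((((u (tVar t₁)).1, (u (tVar t₁)).2 + (tDeg t₁ : ℤ)) : C' × ℤ) =
          (((u (tVar t₂)).1, (u (tVar t₂)).2 + (tDeg t₂ : ℤ)) : C' × ℤ)) ↔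
        τ t (u (tVar t₁)) (u (tVar t₂)) = some ((tDeg t₁ : ℤ) - (tDeg t₂ : ℤ)) := by
      intro C' u
      rw [τ_eq_some_iff, Prod.ext_iff]
      constructor
      · rintro ⟨h1, h2⟩; exact ⟨h1, by omega, by simp only [] at h2 ⊢; omega⟩
      · rintro ⟨h1, h2, h3⟩; exact ⟨h1, by simp only [] at h2 ⊢; omega⟩
    rw [key (Sum.elim v xs), key (Sum.elim w ys), hE (tVar t₁) (tVar t₂)]
  | rel r _ => exact (nomatch r)
  | imp f g ihf ihg =>
    intro xs ys t hB hE
    have hBf : B f ≤ t := le_trans (le_max_left _ _) hB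
    have hBg : B g ≤ t := le_trans (le_max_right _ _) hB
    simp only [Language.BoundedFormula.Realize]
    rw [ihf xs ys t hBf hE, ihg xs ys t hBg hE]
  | all f ih =>
    intro xs ys t hB hE
    have hB3 : 3 * B f + 1 ≤ t := hB
    have hE3 : E (3 * B f + 1) (Sum.elim v xs) (Sum.elim w ys) := E.mono hB3 hE
    have hEB : E (B f) (Sum.elim v xs) (Sum.elim w ys) := E.mono (by omega) hE
    simp only [Language.BoundedFormula.Realize]
    constructor
    · intro hx b
      obtain ⟨a, ha⟩ := extend_E (B f) (Sum.elim v xs) (Sum.elim w ys) hE3 b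
      exact (ih (Fin.snoc xs a) (Fin.snoc ys b) (B f) le_rfl (E_snoc hEB ha)).1 (hx a)
    · intro hy a
      obtain ⟨b, hb⟩ := extend_E (B f) (Sum.elim w ys) (Sum.elim v xs) hE3.symm a
      exact (ih (Fin.snoc xs a) (Fin.snoc ys b) (B f) le_rfl
        (E_snoc hEB fun i => (hb i).symm)).2 (hy b)

/-- Any two structures `C × ℤ`, `D × ℤ` (with nonempty `C`, `D`) are elementarily equivalent. -/
theorem G_elemEquiv (C D : Type) [Nonempty C] [Nonempty D] : G C ≅[LS] G D := by
  rw [Language.elementarilyEquivalent_iff]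
  intro σ
  have h := ef_main (α := Empty) (C := C) (D := D) σ default default default default (B σ) le_rfl ?_
  · exact h
  · rintro (i | i)
    · exact i.elim
    · exact i.elim0

/-- `MS` is isomorphic to `G (Fin 2)`. -/
noncomputable def msEquiv : MS ≃[LS] G (Fin 2) where
  toEquiv := Equiv.prodComm ℤ (Fin 2)
  map_fun' := by
    intro n f x
    rcases n with _ | _ | n
    · exact (nomatch f)
    · rfl
    · exact (nomatch f)
  map_rel' := by intro n r x; exact (nomatch r)

/-- `ℤ` is isomorphic to `G Unit`. -/
noncomputable def zEquiv : ℤ ≃[LS] G Unit where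
  toEquiv := ⟨fun z => ((() , z) : Unit × ℤ), fun p => (p : Unit × ℤ).2, fun _ => rfl, fun _ => rfl⟩
  map_fun' := by
    intro n f x
    rcases n with _ | _ | n
    · exact (nomatch f)
    · rfl
    · exact (nomatch f)
  map_rel' := by intro n r x; exact (nomatch r)

theorem part1 : MS ≅[LS] ℤ :=
  ((Language.StrongHomClass.elementarilyEquivalent msEquiv).trans
    (G_elemEquiv (Fin 2) Unit)).trans
    (Language.StrongHomClass.elementarilyEquivalent zEquiv).symm

/-- Automorphism of `MS` sending `(0,1)` to `c`. -/
noncomputable def msAut (c : MS) : MS ≃[LS] MS where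
  toEquiv :=
    ⟨fun p => (p.1 + c.1, p.2 + c.2 + 1), fun p => (p.1 - c.1, p.2 - c.2 - 1),
      fun p => by simp [Prod.ext_iff]; abel,
      fun p => by simp [Prod.ext_iff]; abel⟩
  map_fun' := by
    intro n f x
    rcases n with _ | _ | n
    · exact (nomatch f)
    · have hf : Language.Structure.funMap f x = (((x 0).1 + 1, (x 0).2) : MS) := rfl
      have hf2 : ∀ y : Fin 1 → MS, Language.Structure.funMap f y = (((y 0).1 + 1, (y 0).2) : MS) :=
        fun _ => rfl
      simp only [Equiv.coe_fn_mk, hf, hf2, Function.comp_apply]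
      simp [Prod.ext_iff]
      ring
    · exact (nomatch f)
  map_rel' := by intro n r x; exact (nomatch r)

theorem transitivity (ψ : LS.Formula (Fin 1)) (c : MS)
    (h : ψ.Realize (fun _ : Fin 1 => (((0 : ℤ), (1 : Fin 2)) : MS))) :
    ψ.Realize (fun _ : Fin 1 => c) := by
  have key := Language.StrongHomClass.realize_formula (msAut c) (φ := ψ)
    (v := fun _ : Fin 1 => (((0 : ℤ), (1 : Fin 2)) : MS))
  have hc : (⇑(msAut c) ∘ fun _ : Fin 1 => (((0 : ℤ), (1 : Fin 2)) : MS)) =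
      fun _ : Fin 1 => c := by
    funext i
    show (((0 : ℤ) + c.1, (1 : Fin 2) + c.2 + 1) : MS) = c
    have h2 : ∀ v : Fin 2, 1 + v + 1 = v := by decide
    simp [Prod.ext_iff, h2]
  rw [hc] at key
  exact key.2 h

/-- Iterated application of `S` to a term. -/
noncomputable def iterS {β : Type} : ℕ → LS.Term β → LS.Term β
  | 0, T => T
  | k + 1, T => Language.Term.func (l := 1) (show LS.Functions 1 from Unit.unit) ![iterS k T]

lemma realize_iterS_MS {β : Type} (k : ℕ) (T : LS.Term β) (u : β → MS) :
    (iterS k T).realize u = (((T.realize u).1 + (k : ℤ), (T.realize u).2) : MS) := by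
  induction k with
  | zero => simp [iterS]
  | succ k ih =>
    have hf : ∀ (f : LS.Functions 1) (y : Fin 1 → MS),
        Language.Structure.funMap f y = (((y 0).1 + 1, (y 0).2) : MS) := fun _ _ => rfl
    show ((((iterS k T).realize u).1 + 1, ((iterS k T).realize u).2) : MS) = _
    simp only [iterS, Language.Term.realize, hf, ih, Matrix.cons_val_zero]
    simp [Prod.ext_iff]
    push_cast
    ring

theorem part4 : SemiIsolatedExt LS (fun _ : Fin 1 => (((0 : ℤ), (1 : Fin 2)) : MS))
    (fun _ : Fin 1 => (((0 : ℤ), (0 : Fin 2)) : MS)) := by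
  refine ⟨⊤, by simp, ?_⟩
  intro N _ g b' _ ψ hψ
  have hall : ∀ c : MS, ψ.Realize (fun _ : Fin 1 => c) := fun c => transitivity ψ c hψ
  set σ : LS.Sentence := Language.Formula.iAlls (Fin 1) (ψ.relabel (fun i => (Sum.inr i : Empty ⊕ Fin 1))) with hσ
  have hMσ : MS ⊨ σ := by
    rw [Language.Sentence.Realize, hσ, Language.Formula.realize_iAlls]
    intro i
    rw [Language.Formula.realize_relabel]
    convert hall (i 0) using 2
    show i _ = i 0
    congr 1
    exact Subsingleton.elim _ _
  have hNσ : N ⊨ σ := (g.map_sentence σ).1 hMσ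
  rw [Language.Sentence.Realize, hσ, Language.Formula.realize_iAlls] at hNσ
  have h2 := hNσ b'
  rw [Language.Formula.realize_relabel] at h2
  convert h2 using 2
  rfl

theorem part5 : ¬ IsolatedExt LS (fun _ : Fin 1 => (((0 : ℤ), (1 : Fin 2)) : MS))
    (fun _ : Fin 1 => (((0 : ℤ), (0 : Fin 2)) : MS)) := by
  rintro ⟨φ, hreal, hiso⟩
  set b : Fin 1 → MS := fun _ => ((0 : ℤ), (1 : Fin 2)) with hb
  set a : Fin 1 → MS := fun _ => ((0 : ℤ), (0 : Fin 2)) with ha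
  set k : ℕ := B φ + 1 with hk
  set b' : Fin 1 → MS := fun _ => (((k : ℤ), (0 : Fin 2)) : MS) with hb'
  have h1 : φ.Realize (Sum.elim b' a) := by
    have he := Language.StrongHomClass.realize_formula msEquiv (φ := φ) (v := Sum.elim b a)
    have h2 : φ.Realize (⇑msEquiv ∘ Sum.elim b a) := he.2 hreal
    have hE : E (B φ) (Sum.elim (⇑msEquiv ∘ Sum.elim b a) (default : Fin 0 → G (Fin 2)))
        (Sum.elim (⇑msEquiv ∘ Sum.elim b' a) (default : Fin 0 → G (Fin 2))) := by
      have e1 : ∀ i : Fin 1, (⇑msEquiv ∘ Sum.elim b a) (Sum.inl i) =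
          (((1 : Fin 2), (0 : ℤ)) : Fin 2 × ℤ) := fun _ => rfl
      have e2 : ∀ i : Fin 1, (⇑msEquiv ∘ Sum.elim b a) (Sum.inr i) =
          (((0 : Fin 2), (0 : ℤ)) : Fin 2 × ℤ) := fun _ => rfl
      have e3 : ∀ i : Fin 1, (⇑msEquiv ∘ Sum.elim b' a) (Sum.inl i) =
          (((0 : Fin 2), (k : ℤ)) : Fin 2 × ℤ) := fun _ => rfl
      have e4 : ∀ i : Fin 1, (⇑msEquiv ∘ Sum.elim b' a) (Sum.inr i) =
          (((0 : Fin 2), (0 : ℤ)) : Fin 2 × ℤ) := fun _ => rfl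
      rintro ((i | i) | i0) ((j | j) | j0)
      · simp only [Sum.elim_inl, e1, e3]; rw [τ_self, τ_self]
      · simp only [Sum.elim_inl, Sum.elim_inr, e1, e2, e3, e4]
        rw [τ_eq_none_iff.2 (Or.inl (by decide)), τ_eq_none_iff.2 (Or.inr (by omega))]
      · exact j0.elim0
      · simp only [Sum.elim_inl, Sum.elim_inr, e1, e2, e3, e4]
        rw [τ_eq_none_iff.2 (Or.inl (by decide)), τ_eq_none_iff.2 (Or.inr (by omega))]
      · simp only [Sum.elim_inl, Sum.elim_inr, e2, e4]
      · exact j0.elim0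
      · exact i0.elim0
      · exact i0.elim0
      · exact i0.elim0
    have h3 := ef_main (C := Fin 2) (D := Fin 2) φ (⇑msEquiv ∘ Sum.elim b a)
      (⇑msEquiv ∘ Sum.elim b' a) default default (B φ) le_rfl hE
    have h4 : φ.Realize (⇑msEquiv ∘ Sum.elim b' a) := by
      unfold Language.Formula.Realize at h2 ⊢
      convert h3.1 (by convert h2 using 1) using 1
    exact (Language.StrongHomClass.realize_formula msEquiv (φ := φ)
      (v := Sum.elim b' a)).1 h4
  have hrefl : (⇑(Language.ElementaryEmbedding.refl LS MS) ∘ a) = a := by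
    funext i; simp [Language.ElementaryEmbedding.refl_apply]
  set ψ : LS.Formula (Fin 1 ⊕ Fin 1) :=
    Language.Formula.not ((iterS k (Language.Term.var (Sum.inr 0))).equal
      (Language.Term.var (Sum.inl 0))) with hψdef
  have hψb : ψ.Realize (Sum.elim b a) := by
    rw [hψdef]
    simp only [Language.Formula.realize_not, Language.Formula.realize_equal, realize_iterS_MS,
      Language.Term.realize_var, Sum.elim_inl, Sum.elim_inr]
    simp [hb, ha, Prod.ext_iff]
  have h5 := hiso MS (Language.ElementaryEmbedding.refl LS MS) b' (by rwa [hrefl]) ψ hψb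
  rw [hrefl, hψdef] at h5
  simp only [Language.Formula.realize_not, Language.Formula.realize_equal, realize_iterS_MS,
    Language.Term.realize_var, Sum.elim_inl, Sum.elim_inr] at h5
  exact h5 (by simp [hb', ha, Prod.ext_iff])


lemma iterate_snd (k : ℕ) (p : MS) : ((fun p : MS => (p.1 + 1, p.2))^[k] p).2 = p.2 := by
  induction k generalizing p with
  | zero => simp
  | succ k ih => rw [Function.iterate_succ_apply]; exact ih _

/-- **Example 2 (i).** In the model `(ℤ × {0,1}, S)`, which is elementarily
equivalent to `(ℤ, S)`, for the elements `a = (0,0)` and `b = (0,1)` (which lie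
in different `S`-chains) the type `tp(b/a)` is semi-isolated but not
isolated. -/
theorem example_2_i :
    (MS ≅[LS] ℤ) ∧
    (∀ k : ℕ, (fun p : MS => (p.1 + 1, p.2))^[k] ((0 : ℤ), (0 : Fin 2)) ≠
      ((0 : ℤ), (1 : Fin 2))) ∧
    (∀ k : ℕ, (fun p : MS => (p.1 + 1, p.2))^[k] ((0 : ℤ), (1 : Fin 2)) ≠
      ((0 : ℤ), (0 : Fin 2))) ∧
    SemiIsolatedExt LS (fun _ : Fin 1 => (((0 : ℤ), (1 : Fin 2)) : MS))
      (fun _ : Fin 1 => (((0 : ℤ), (0 : Fin 2)) : MS)) ∧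
    ¬ IsolatedExt LS (fun _ : Fin 1 => (((0 : ℤ), (1 : Fin 2)) : MS))
      (fun _ : Fin 1 => (((0 : ℤ), (0 : Fin 2)) : MS)) := by
  refine ⟨part1, ?_, ?_, part4, part5⟩
  · intro k h
    have h2 := congrArg Prod.snd h
    rw [iterate_snd] at h2
    exact absurd h2 (by decide)
  · intro k h
    have h2 := congrArg Prod.snd h
    rw [iterate_snd] at h2
    exact absurd h2 (by decide)


end KimPaper
end
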